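/- arXiv:2408.06489 — 5 statements merged into one kernel-verified Lean document; each statement's English description precedes it below -/
import Mathlib

section
/- Let N be a DAG. Then N is weakly forest-based if and only if N admits a leaf path partition. -/
/-!
Basic notions for finite directed acyclic graphs (DAGs), represented by an
adjacency (arc) relation `A` on a vertex type `V`.
-/

namespace Paper

variable {V : Type*}

/-- A leaf (sink) of the digraph `A`: a vertex of outdegree 0. -/
def IsLeaf (A : V → V → Prop) (v : V) : Prop := ∀ w, ¬ A v w

/-- A root (source) of the digraph `A`: a vertex of indegree 0. -/
def IsRoot (A : V → V → Prop) (v : V) : Prop := ∀ w, ¬ A w v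

/-- The arc relation `A` is acyclic (no directed cycles). -/
def Acyclic (A : V → V → Prop) : Prop := ∀ v, ¬ Relation.TransGen A v v

/-- A directed path in the digraph `A`: a nonempty list of pairwise distinct
vertices, consecutive ones joined by arcs. -/
def IsPath (A : V → V → Prop) (p : List V) : Prop :=
  p ≠ [] ∧ p.Nodup ∧ p.Chain' A

/-- An induced directed path: a directed path such that the only arcs of the
digraph among its vertices are the consecutive arcs of the path. -/
def IsInducedPath (A : V → V → Prop) (p : List V) : Prop :=
  IsPath A p ∧ ∀ i j : Fin p.length, A (p.get i) (p.get j) → (j : ℕ) = (i : ℕ) + 1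

/-- A path partition: a collection of vertex-disjoint directed paths whose
vertex sets partition `V` (every vertex lies in exactly one member). -/
def IsPathPartition (A : V → V → Prop) (P : Set (List V)) : Prop :=
  (∀ p ∈ P, IsPath A p) ∧ ∀ v : V, ∃! p, p ∈ P ∧ v ∈ p

/-- The path `p` ends at a leaf of the digraph `A`. -/
def EndsAtLeaf (A : V → V → Prop) (p : List V) : Prop :=
  ∃ x, p.getLast? = some x ∧ IsLeaf A x

/-- A leaf path partition: a path partition all of whose paths end at a leaf. -/
def IsLeafPP (A : V → V → Prop) (P : Set (List V)) : Prop :=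
  IsPathPartition A P ∧ ∀ p ∈ P, EndsAtLeaf A p

/-- A leaf induced path partition: a leaf path partition all of whose paths are
induced paths. -/
def IsLeafIPP (A : V → V → Prop) (P : Set (List V)) : Prop :=
  IsLeafPP A P ∧ ∀ p ∈ P, IsInducedPath A p

/-- A forest: an acyclic digraph in which every vertex has indegree at most one
(equivalently, every connected component of the underlying undirected graph is
a tree, i.e. is connected, has a single root and no vertex of indegree ≥ 2). -/
def IsForest (F : V → V → Prop) : Prop :=
  Acyclic F ∧ ∀ ⦃u w v⦄, F u v → F w v → u = w

/-- `N = (V, A)` is weakly forest-based: there is a subrelation `F` of `A` that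
is a spanning forest whose leaf set equals the leaf set of `N`. -/
def WeaklyForestBased (A : V → V → Prop) : Prop :=
  ∃ F : V → V → Prop, (∀ ⦃u v⦄, F u v → A u v) ∧ IsForest F ∧
    ∀ v, IsLeaf F v ↔ IsLeaf A v

/-- Reachability in the underlying undirected graph of `F` (i.e. being in the
same connected component of `F`). -/
def UndirReach (F : V → V → Prop) : V → V → Prop :=
  Relation.ReflTransGen fun a b => F a b ∨ F b a

/-- `N = (V, A)` is forest-based: there is a subrelation `F` of `A` that is a
spanning forest whose leaf set equals the leaf set of `N`, such that every arc
of `A` not in `F` has its endpoints in different trees (connected components)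
of `F`. -/
def ForestBased (A : V → V → Prop) : Prop :=
  ∃ F : V → V → Prop, (∀ ⦃u v⦄, F u v → A u v) ∧ IsForest F ∧
    (∀ v, IsLeaf F v ↔ IsLeaf A v) ∧
    ∀ u v, A u v → ¬ F u v → ¬ UndirReach F u v

/-! A forest whose leaves are those of `N` can be thinned, by keeping a single child of every
non-leaf vertex, to a linear forest with the same leaves, and the maximal paths of a linear
forest partition its vertices. Conversely, the arcs of a leaf path partition form a linear
forest in `N`; its leaves are the last vertices of the paths, i.e. leaves of `N`. -/

theorem _root_.List.Nodup.eq_of_pair_infix_left {α : Type*} {l : List α} {u v w : α}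
    (hl : l.Nodup) (hu : [v, u] <:+: l) (hw : [v, w] <:+: l) : u = w := by
  induction l with
  | nil => simp at hu
  | cons a l ih =>
    obtain ⟨ha, hl⟩ := List.nodup_cons.mp hl
    have hva : ∀ {x}, [v, x] <:+: l → v ≠ a := fun h hv => ha (hv ▸ h.subset (by simp))
    rcases List.infix_cons_iff.mp hu with hu | hu <;> rcases List.infix_cons_iff.mp hw with hw | hw
    · cases l <;> simp_all
    · simp_all
    · simp_all
    · exact ih hl hu hw

theorem _root_.List.Nodup.eq_of_pair_infix_right {α : Type*} {l : List α} {u v w : α}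
    (hl : l.Nodup) (hu : [u, v] <:+: l) (hw : [w, v] <:+: l) : u = w :=
  (List.nodup_reverse.mpr hl).eq_of_pair_infix_left (v := v)
    (by simpa using List.reverse_infix.mpr hu) (by simpa using List.reverse_infix.mpr hw)

section

open Relation Function

variable {S A : V → V → Prop}

theorem Acyclic.mono (hSA : ∀ ⦃u v⦄, S u v → A u v) (hA : Acyclic A) : Acyclic S :=
  fun v hv => hA v (TransGen.mono hSA v v hv)

theorem Acyclic.swap (hS : Acyclic S) : Acyclic (swap S) :=
  fun v hv => hS v (transGen_swap.mp hv)

theorem Acyclic.wellFounded [Finite V] (hS : Acyclic S) : WellFounded S :=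
  haveI : Std.Irrefl (TransGen S) := ⟨hS⟩
  Subrelation.wf TransGen.single (Finite.wellFounded_of_trans_of_irrefl _)

theorem Acyclic.nodup_of_isChain (hS : Acyclic S) {p : List V} (hp : p.IsChain S) : p.Nodup :=
  List.nodup_iff_pairwise_ne.mpr <|
    (List.isChain_iff_pairwise.mp (hp.imp fun _ _ => TransGen.single)).imp
      fun {a b} (h : TransGen S a b) (huv : a = b) => hS b (huv ▸ h)

theorem IsForest.mono (hSA : ∀ ⦃u v⦄, S u v → A u v) (hA : IsForest A) : IsForest S :=
  ⟨hA.1.mono hSA, fun _ _ _ hu hw => hA.2 (hSA hu) (hSA hw)⟩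

theorem exists_rightUnique_isLeaf_iff (A : V → V → Prop) :
    ∃ S : V → V → Prop, (∀ ⦃u v⦄, S u v → A u v) ∧ Relator.RightUnique S ∧
      ∀ v, IsLeaf S v ↔ IsLeaf A v := by
  have : ∀ u, ∃ o : Option V, (∀ v ∈ o, A u v) ∧ (o = none → IsLeaf A u) := by
    intro u
    by_cases hu : IsLeaf A u
    · exact ⟨none, by simp, fun _ => hu⟩
    · obtain ⟨v, hv⟩ := not_forall_not.mp hu
      exact ⟨some v, by simpa, by simp⟩
  choose s hsA hsleaf using this
  refine ⟨fun u v => v ∈ s u, fun u v => hsA u v, fun _ _ _ => Option.mem_unique,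
    fun v => ⟨fun hv => hsleaf v (Option.eq_none_iff_forall_not_mem.mpr hv),
      fun hv w hw => hv w (hsA v w hw)⟩⟩

/-- `swap S` being a forest means that every vertex has outdegree at most one, so `S` is a
disjoint union of directed paths. -/
def IsLinearForest (S : V → V → Prop) : Prop :=
  IsForest S ∧ IsForest (swap S)

theorem IsForest.exists_isLinearForest (hA : IsForest A) :
    ∃ S : V → V → Prop, (∀ ⦃u v⦄, S u v → A u v) ∧ IsLinearForest S ∧
      ∀ v, IsLeaf S v ↔ IsLeaf A v := by
  obtain ⟨S, hSA, hS, hleaf⟩ := exists_rightUnique_isLeaf_iff A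
  have hSF : IsForest S := hA.mono hSA
  exact ⟨S, hSA, ⟨hSF, hSF.1.swap, fun _ _ _ hu hw => hS hu hw⟩, hleaf⟩

theorem Acyclic.exists_isChain_endsAtLeaf [Finite V] (hS : Acyclic S) (v : V) :
    ∃ t, (v :: t).IsChain S ∧ EndsAtLeaf S (v :: t) := by
  obtain ⟨w, hvw, hw⟩ := hS.swap.wellFounded.has_min {w | ReflTransGen S v w} ⟨v, .refl⟩
  obtain ⟨t, ht, hlast⟩ := List.exists_isChain_cons_of_relationReflTransGen hvw
  refine ⟨t, ht, w, ?_, fun x hx => hw x (hvw.tail hx) hx⟩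
  rw [List.getLast?_eq_some_getLast (List.cons_ne_nil _ _), hlast]

theorem endsAtLeaf_append_cons {a t : List V} {v : V} :
    EndsAtLeaf S (a ++ v :: t) ↔ EndsAtLeaf S (v :: t) := by
  rw [EndsAtLeaf, EndsAtLeaf, List.getLast?_append_of_ne_nil _ (List.cons_ne_nil v t)]

theorem endsAtLeaf_singleton {x : V} : EndsAtLeaf S [x] ↔ IsLeaf S x := by
  simp [EndsAtLeaf]

theorem isChain_cons_eq_of_endsAtLeaf (hS : Relator.RightUnique S) {x : V} {p q : List V}
    (hp : (x :: p).IsChain S) (hq : (x :: q).IsChain S)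
    (hpl : EndsAtLeaf S (x :: p)) (hql : EndsAtLeaf S (x :: q)) : p = q := by
  induction p generalizing x q with
  | nil =>
    cases q with
    | nil => rfl
    | cons z q => exact absurd (List.isChain_cons_cons.mp hq).1 (endsAtLeaf_singleton.mp hpl z)
  | cons y p ih =>
    cases q with
    | nil => exact absurd (List.isChain_cons_cons.mp hp).1 (endsAtLeaf_singleton.mp hql y)
    | cons z q =>
      obtain rfl := hS (List.isChain_cons_cons.mp hp).1 (List.isChain_cons_cons.mp hq).1
      rw [ih hp.tail hq.tail (endsAtLeaf_append_cons (a := [x]) |>.mp hpl)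
        (endsAtLeaf_append_cons (a := [x]) |>.mp hql)]

/-- The maximal directed paths of `S`; the last condition says that `p` starts at a root. -/
def maximalPaths (S : V → V → Prop) : Set (List V) :=
  {p | p.IsChain S ∧ EndsAtLeaf S p ∧ EndsAtLeaf (swap S) p.reverse}

theorem reverse_mem_maximalPaths_swap {p : List V} (hp : p ∈ maximalPaths S) :
    p.reverse ∈ maximalPaths (swap S) :=
  ⟨List.isChain_reverse.mpr hp.1, hp.2.2, by simpa using hp.2.1⟩

theorem eq_of_append_cons_mem_maximalPaths (hS : Relator.RightUnique S) {v : V}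
    {a b a' b' : List V} (hp : a ++ v :: b ∈ maximalPaths S)
    (hq : a' ++ v :: b' ∈ maximalPaths S) : b = b' :=
  isChain_cons_eq_of_endsAtLeaf hS hp.1.right_of_append hq.1.right_of_append
    (endsAtLeaf_append_cons.mp hp.2.1) (endsAtLeaf_append_cons.mp hq.2.1)

theorem IsLinearForest.eq_of_mem_maximalPaths (hS : IsLinearForest S) {v : V} {p q : List V}
    (hp : p ∈ maximalPaths S) (hq : q ∈ maximalPaths S) (hvp : v ∈ p) (hvq : v ∈ q) :
    p = q := by
  obtain ⟨a, b, rfl⟩ := List.append_of_mem hvp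
  obtain ⟨a', b', rfl⟩ := List.append_of_mem hvq
  have hS' : Relator.RightUnique S := fun _ _ _ hu hw => hS.2.2 hu hw
  have hSr : Relator.RightUnique (swap S) := fun _ _ _ hu hw => hS.1.2 hu hw
  have hb : b = b' := eq_of_append_cons_mem_maximalPaths hS' hp hq
  have ha : a.reverse = a'.reverse :=
    eq_of_append_cons_mem_maximalPaths hSr (by simpa using reverse_mem_maximalPaths_swap hp)
      (by simpa using reverse_mem_maximalPaths_swap hq)
  rw [List.reverse_inj.mp ha, hb]

theorem IsLinearForest.exists_mem_maximalPaths [Finite V] (hS : IsLinearForest S) (v : V) :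
    ∃ p ∈ maximalPaths S, v ∈ p := by
  obtain ⟨t, ht, htl⟩ := hS.1.1.exists_isChain_endsAtLeaf v
  obtain ⟨s, hs, hsl⟩ := hS.2.1.exists_isChain_endsAtLeaf v
  refine ⟨s.reverse ++ v :: t, ⟨?_, endsAtLeaf_append_cons.mpr htl, ?_⟩, by simp⟩
  · have hsr : (s.reverse ++ [v]).IsChain S := by simpa using List.isChain_reverse.mpr hs
    simpa using hsr.append_overlap ht (List.cons_ne_nil v [])
  · simpa using endsAtLeaf_append_cons (a := t.reverse) |>.mpr hsl

theorem IsLinearForest.isLeafPP_maximalPaths [Finite V] (hS : IsLinearForest S) :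
    IsLeafPP S (maximalPaths S) := by
  refine ⟨⟨fun p hp => ⟨?_, hS.1.1.nodup_of_isChain hp.1, hp.1⟩, fun v => ?_⟩,
    fun p hp => hp.2.1⟩
  · obtain ⟨x, hx, -⟩ := hp.2.1
    rintro rfl
    simp at hx
  · obtain ⟨p, hp, hvp⟩ := hS.exists_mem_maximalPaths v
    exact ⟨p, ⟨hp, hvp⟩, fun q ⟨hq, hvq⟩ => hS.eq_of_mem_maximalPaths hq hp hvq hvp⟩

theorem IsLeafPP.mono (hSA : ∀ ⦃u v⦄, S u v → A u v)
    (hleaf : ∀ v, IsLeaf S v → IsLeaf A v)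
    {P : Set (List V)} (hP : IsLeafPP S P) : IsLeafPP A P := by
  refine ⟨⟨fun p hp => ?_, hP.1.2⟩, fun p hp => ?_⟩
  · obtain ⟨hne, hnd, hc⟩ := hP.1.1 p hp
    exact ⟨hne, hnd, List.IsChain.imp hSA hc⟩
  · obtain ⟨x, hx, hxl⟩ := hP.2 p hp
    exact ⟨x, hx, hleaf x hxl⟩

theorem WeaklyForestBased.exists_isLeafPP [Finite V] (hA : WeaklyForestBased A) :
    ∃ P, IsLeafPP A P := by
  obtain ⟨F, hFA, hF, hFleaf⟩ := hA
  obtain ⟨S, hSF, hS, hSleaf⟩ := hF.exists_isLinearForest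
  exact ⟨maximalPaths S, hS.isLeafPP_maximalPaths.mono (fun _ _ h => hFA (hSF h))
    fun v hv => (hFleaf v).mp ((hSleaf v).mp hv)⟩

def pathArcs (P : Set (List V)) (u v : V) : Prop :=
  ∃ p ∈ P, [u, v] <:+: p

theorem IsPathPartition.rel_of_pathArcs {P : Set (List V)} (hP : IsPathPartition A P) {u v : V}
    (h : pathArcs P u v) : A u v := by
  obtain ⟨p, hp, huv⟩ := h
  exact List.isChain_pair.mp (List.IsChain.infix (hP.1 p hp).2.2 huv)

theorem IsPathPartition.isForest_pathArcs {P : Set (List V)} (hA : Acyclic A)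
    (hP : IsPathPartition A P) : IsForest (pathArcs P) := by
  refine ⟨hA.mono fun _ _ => hP.rel_of_pathArcs, ?_⟩
  rintro u w v ⟨p, hp, hu⟩ ⟨q, hq, hw⟩
  obtain rfl : p = q := (hP.2 v).unique ⟨hp, hu.subset (by simp)⟩ ⟨hq, hw.subset (by simp)⟩
  exact (hP.1 p hp).2.1.eq_of_pair_infix_right hu hw

theorem IsLeafPP.isLeaf_of_isLeaf_pathArcs {P : Set (List V)} (hP : IsLeafPP A P) {v : V}
    (hv : IsLeaf (pathArcs P) v) : IsLeaf A v := by
  obtain ⟨p, ⟨hp, hvp⟩, -⟩ := hP.1.2 v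
  obtain ⟨s, t, rfl⟩ := List.append_of_mem hvp
  cases t with
  | nil =>
    obtain ⟨x, hx, hxl⟩ := hP.2 _ hp
    simp only [List.getLast?_append, List.getLast?_singleton, Option.some_or,
      Option.some.injEq] at hx
    rwa [hx]
  | cons w t => exact absurd ⟨_, hp, ⟨s, t, by simp⟩⟩ (hv w)

theorem IsLeafPP.weaklyForestBased (hA : Acyclic A) {P : Set (List V)} (hP : IsLeafPP A P) :
    WeaklyForestBased A :=
  ⟨pathArcs P, fun _ _ => hP.1.rel_of_pathArcs, hP.1.isForest_pathArcs hA,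
    fun _ => ⟨hP.isLeaf_of_isLeaf_pathArcs, fun hv w hw => hv w (hP.1.rel_of_pathArcs hw)⟩⟩

end

/-- Let `N` be a (finite) DAG. Then `N` is weakly forest-based
if and only if `N` admits a leaf path partition. -/
theorem weaklyForestBased_iff_leafPathPartition
    {V : Type*} [Fintype V] (A : V → V → Prop) (hacy : Acyclic A) :
    WeaklyForestBased A ↔ ∃ P : Set (List V), IsLeafPP A P :=
  ⟨WeaklyForestBased.exists_isLeafPP, fun ⟨_, hP⟩ => hP.weaklyForestBased hacy⟩

end Paper
end

section
/- Let N be a DAG, let v be a leaf of N, and let N' be the DAG obtained from N by adding a new vertex v' together with the single arc (v, v'). Then N admits a leaf induced path partition if and only if N' admits a leaf induced path partition. -/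
/-!
Basic notions for finite directed acyclic graphs (DAGs), represented by an
adjacency (arc) relation `A` on a vertex type `V`.
-/

namespace Paper

variable {V : Type*}

/-!
If `N` has a leaf induced path partition, the leaf `v` is the last vertex of its path, and
appending `v'` to that path gives one of `N'`. Conversely, in a leaf induced path partition
of `N'` the leaf `v'` ends its path, and it is not alone there: otherwise `v`, whose only
out-neighbour is `v'`, would have to end its own path without being a leaf of `N'`. So `v'`
is preceded by `v`, its only in-neighbour, and deleting `v'` gives a partition of `N`.
-/

theorem existsUnique_mem_image_of_iff {α β : Type*} {P : Set α} {f : α → β} {r : α → Prop}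
    {s : β → Prop} (h : ∀ p ∈ P, s (f p) ↔ r p) (hu : ∃! p, p ∈ P ∧ r p) :
    ∃! q, q ∈ f '' P ∧ s q := by
  obtain ⟨p, ⟨hp, hrp⟩, huniq⟩ := hu
  refine ⟨f p, ⟨Set.mem_image_of_mem f hp, (h p hp).2 hrp⟩, ?_⟩
  rintro _ ⟨⟨p', hp', rfl⟩, hs⟩
  rw [huniq p' ⟨hp', (h p' hp').1 hs⟩]

section Paths

variable {α : Type*} {R : α → α → Prop}

theorem isPath_iff {p : List α} :
    IsPath R p ↔ p ≠ [] ∧ p.Nodup ∧ p.IsChain R :=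
  Iff.rfl

theorem isInducedPath_iff_getElem {p : List α} :
    IsInducedPath R p ↔ IsPath R p ∧
      ∀ i (hi : i < p.length) j (hj : j < p.length), R p[i] p[j] → j = i + 1 := by
  simp [IsInducedPath, Fin.forall_iff]

theorem isInducedPath_map_iff {β : Type*} {S : β → β → Prop} {f : β → α}
    (hf : Function.Injective f) (hRS : ∀ a b, R (f a) (f b) ↔ S a b) {p : List β} :
    IsInducedPath R (p.map f) ↔ IsInducedPath S p := by
  simp [isInducedPath_iff_getElem, isPath_iff, List.nodup_map_iff hf, List.isChain_map, hRS]

theorem isPath_append_singleton_iff {p : List α} {x : α} (hp : p ≠ []) :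
    IsPath R (p ++ [x]) ↔ IsPath R p ∧ x ∉ p ∧ R (p.getLast hp) x := by
  simp [isPath_iff, hp, List.nodup_append, List.isChain_append, List.getLast?_eq_some_getLast hp,
    List.forall_mem_ne', and_assoc, and_left_comm]

theorem isInducedPath_append_singleton_iff {p : List α} {x : α} (hp : p ≠ [])
    (hx : IsLeaf R x) :
    IsInducedPath R (p ++ [x]) ↔
      IsInducedPath R p ∧ x ∉ p ∧ ∀ y ∈ p, R y x ↔ y = p.getLast hp := by
  have hidx : (∀ i (hi : i < (p ++ [x]).length) j (hj : j < (p ++ [x]).length),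
      R (p ++ [x])[i] (p ++ [x])[j] → j = i + 1) ↔
      (∀ i (hi : i < p.length) j (hj : j < p.length), R p[i] p[j] → j = i + 1) ∧
        ∀ i (hi : i < p.length), R p[i] x → i + 1 = p.length := by
    have hx' : ∀ y, ¬ R x y := hx
    simp only [List.length_append, List.length_singleton, Nat.forall_lt_succ_right']
    simp +contextual [hx', forall_and, eq_comm]
  have hlast (hnd : p.Nodup) : (R (p.getLast hp) x ∧
      ∀ i (hi : i < p.length), R p[i] x → i + 1 = p.length) ↔
      ∀ y ∈ p, R y x ↔ y = p.getLast hp := by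
    constructor
    · rintro ⟨hRlast, hRidx⟩ y hy
      obtain ⟨i, hi, rfl⟩ := List.getElem_of_mem hy
      refine ⟨fun hR => ?_, fun h => h ▸ hRlast⟩
      simp only [List.getLast_eq_getElem, ← hRidx i hi hR, Nat.add_sub_cancel]
    · intro h
      refine ⟨(h _ (List.getLast_mem hp)).2 rfl, fun i hi hR => ?_⟩
      have := (h _ (List.getElem_mem hi)).1 hR
      rw [List.getLast_eq_getElem, hnd.getElem_inj_iff] at this
      omega
  rw [isInducedPath_iff_getElem, isInducedPath_iff_getElem, isPath_append_singleton_iff hp, hidx]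
  constructor
  · rintro ⟨⟨hpath, hxp, hRlast⟩, hRp, hRidx⟩
    exact ⟨⟨hpath, hRp⟩, hxp, (hlast hpath.2.1).1 ⟨hRlast, hRidx⟩⟩
  · rintro ⟨⟨hpath, hRp⟩, hxp, hR⟩
    obtain ⟨hRlast, hRidx⟩ := (hlast hpath.2.1).2 hR
    exact ⟨⟨hpath, hxp, hRlast⟩, hRp, hRidx⟩

theorem _root_.List.IsChain.getLast?_eq_or_exists_rel {l : List α} {x : α} (hc : l.IsChain R)
    (hx : x ∈ l) : l.getLast? = some x ∨ ∃ y ∈ l, R x y := by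
  obtain ⟨s, t, rfl⟩ := List.append_of_mem hx
  rcases t with _ | ⟨y, t⟩
  · simp
  · exact Or.inr ⟨y, by simp, (List.isChain_append_cons_cons.mp hc).2.1⟩

theorem IsLeaf.getLast?_eq_of_mem {l : List α} {x : α} (hx : IsLeaf R x) (hc : l.IsChain R)
    (hmem : x ∈ l) : l.getLast? = some x :=
  (hc.getLast?_eq_or_exists_rel hmem).resolve_right fun ⟨y, _, hxy⟩ => hx y hxy

theorem _root_.List.map_some_reduceOption {l : List (Option α)} (h : none ∉ l) :
    l.reduceOption.map some = l := by
  induction l with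
  | nil => rfl
  | cons a l ih => cases a <;> simp_all [List.reduceOption_cons_of_some]

@[simp]
theorem _root_.List.reduceOption_map_some (l : List α) :
    (l.map some).reduceOption = l := by
  simp [List.reduceOption, List.filterMap_map]

def IsLeafInducedPath (R : α → α → Prop) (p : List α) : Prop :=
  IsInducedPath R p ∧ EndsAtLeaf R p

theorem isLeafIPP_iff {P : Set (List α)} :
    IsLeafIPP R P ↔
      (∀ p ∈ P, IsLeafInducedPath R p) ∧ ∀ a, ∃! p, p ∈ P ∧ a ∈ p := by
  unfold IsLeafIPP IsLeafPP IsPathPartition IsLeafInducedPath IsInducedPath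
  grind

end Paths

section PendantLeaf

variable {A : V → V → Prop} {v : V}

def withPendant (A : V → V → Prop) (v : V) : Option V → Option V → Prop :=
  fun a b => (∃ u w : V, a = some u ∧ b = some w ∧ A u w) ∨ (a = some v ∧ b = none)

@[simp]
theorem withPendant_some_some {a b : V} : withPendant A v (some a) (some b) ↔ A a b := by
  simp [withPendant]

@[simp]
theorem withPendant_some_none {a : V} : withPendant A v (some a) none ↔ a = v := by
  simp [withPendant]

@[simp]
theorem not_withPendant_none {b : Option V} : ¬ withPendant A v none b := by
  simp [withPendant]

theorem isLeaf_withPendant_none : IsLeaf (withPendant A v) none :=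
  fun _ => not_withPendant_none

theorem isLeaf_withPendant_some_iff {w : V} :
    IsLeaf (withPendant A v) (some w) ↔ IsLeaf A w ∧ w ≠ v := by
  simp [IsLeaf, Option.forall, and_comm]

theorem isInducedPath_withPendant_map_some_iff {q : List V} :
    IsInducedPath (withPendant A v) (q.map some) ↔ IsInducedPath A q :=
  isInducedPath_map_iff (Option.some_injective V) fun _ _ => withPendant_some_some

theorem isInducedPath_withPendant_append_none_iff {q : List V} (hq : q ≠ []) :
    IsInducedPath (withPendant A v) (q.map some ++ [none]) ↔
      IsInducedPath A q ∧ q.getLast? = some v := by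
  rw [isInducedPath_append_singleton_iff (by simpa using hq) isLeaf_withPendant_none,
    isInducedPath_withPendant_map_some_iff]
  have hnone : none ∉ q.map some := by simp
  simp only [hnone, not_false_eq_true, true_and, List.forall_mem_map, List.getLast_map,
    withPendant_some_none, Option.some_inj, List.getLast?_eq_some_getLast hq]
  exact and_congr_right fun _ =>
    ⟨fun h => (h _ (List.getLast_mem hq)).2 rfl, fun h a _ => by rw [h]⟩

open Classical in
noncomputable def extendPath (v : V) (q : List V) : List (Option V) :=
  if v ∈ q then q.map some ++ [none] else q.map some

@[simp]
theorem some_mem_extendPath {u : V} {q : List V} : some u ∈ extendPath v q ↔ u ∈ q := by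
  unfold extendPath
  split_ifs <;> simp

@[simp]
theorem none_mem_extendPath {q : List V} : none ∈ extendPath v q ↔ v ∈ q := by
  unfold extendPath
  split_ifs <;> simp [*]

theorem IsLeafInducedPath.extendPath (hv : IsLeaf A v) {q : List V}
    (hq : IsLeafInducedPath A q) : IsLeafInducedPath (withPendant A v) (extendPath v q) := by
  obtain ⟨hind, x, hx, hleaf⟩ := hq
  by_cases hvq : v ∈ q
  · have hlast : q.getLast? = some v := hv.getLast?_eq_of_mem hind.1.2.2 hvq
    rw [Paper.extendPath, if_pos hvq]
    exact ⟨(isInducedPath_withPendant_append_none_iff hind.1.1).2 ⟨hind, hlast⟩,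
      none, by simp, isLeaf_withPendant_none⟩
  · rw [Paper.extendPath, if_neg hvq]
    refine ⟨isInducedPath_withPendant_map_some_iff.2 hind, some x, by simp [hx],
      isLeaf_withPendant_some_iff.2 ⟨hleaf, ?_⟩⟩
    rintro rfl
    exact hvq (List.mem_of_getLast? hx)

theorem IsLeafInducedPath.reduceOption (hv : IsLeaf A v) {p : List (Option V)}
    (hp : IsLeafInducedPath (withPendant A v) p) (hne : p ≠ [none]) :
    IsLeafInducedPath A p.reduceOption := by
  obtain ⟨hind, x, hx, hleaf⟩ := hp
  by_cases hnone : none ∈ p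
  · obtain ⟨l, rfl⟩ := List.getLast?_eq_some_iff.1
      (isLeaf_withPendant_none.getLast?_eq_of_mem hind.1.2.2 hnone)
    have hl : l ≠ [] := by rintro rfl; exact hne rfl
    have hnl : none ∉ l := ((isPath_append_singleton_iff hl).1 hind.1).2.1
    obtain ⟨q, rfl⟩ : ∃ q : List V, q.map some = l := ⟨_, List.map_some_reduceOption hnl⟩
    obtain ⟨hindq, hlast⟩ :=
      (isInducedPath_withPendant_append_none_iff (by simpa using hl)).1 hind
    simpa [List.reduceOption_append] using ⟨hindq, v, hlast, hv⟩
  · obtain ⟨q, rfl⟩ : ∃ q : List V, q.map some = p :=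
      ⟨_, List.map_some_reduceOption hnone⟩
    obtain ⟨y, -, rfl⟩ := List.mem_map.1 (List.mem_of_getLast? hx)
    rw [List.reduceOption_map_some]
    exact ⟨isInducedPath_withPendant_map_some_iff.1 hind, y, by simpa using hx,
      (isLeaf_withPendant_some_iff.1 hleaf).1⟩

theorem IsLeafIPP.singleton_none_notMem (hv : IsLeaf A v) {P : Set (List (Option V))}
    (hP : IsLeafIPP (withPendant A v) P) : [none] ∉ P := by
  intro hnone
  obtain ⟨hpaths, hcover⟩ := isLeafIPP_iff.1 hP
  obtain ⟨p, ⟨hp, hvp⟩, -⟩ := hcover (some v)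
  obtain ⟨⟨hpath, -⟩, x, hx, hleaf⟩ := hpaths p hp
  rcases hpath.2.2.getLast?_eq_or_exists_rel hvp with hlast | ⟨y, hy, hvy⟩
  · obtain rfl : some v = x := Option.some_injective _ (hlast.symm.trans hx)
    exact (isLeaf_withPendant_some_iff.1 hleaf).2 rfl
  · obtain rfl : y = none := by
      cases y with
      | none => rfl
      | some w => exact absurd (withPendant_some_some.1 hvy) (hv w)
    obtain ⟨r, -, hr⟩ := hcover none
    have : p = [none] := (hr p ⟨hp, hy⟩).trans (hr _ ⟨hnone, by simp⟩).symm
    simp [this] at hvp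

theorem IsLeafIPP.image_extendPath (hv : IsLeaf A v) {P : Set (List V)} (hP : IsLeafIPP A P) :
    IsLeafIPP (withPendant A v) (extendPath v '' P) := by
  obtain ⟨hpaths, hcover⟩ := isLeafIPP_iff.1 hP
  refine isLeafIPP_iff.2 ⟨Set.forall_mem_image.2 fun q hq => (hpaths q hq).extendPath hv, ?_⟩
  rintro (_ | u)
  · exact existsUnique_mem_image_of_iff (fun _ _ => none_mem_extendPath) (hcover v)
  · exact existsUnique_mem_image_of_iff (fun _ _ => some_mem_extendPath) (hcover u)

theorem IsLeafIPP.image_reduceOption (hv : IsLeaf A v) {P : Set (List (Option V))}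
    (hP : IsLeafIPP (withPendant A v) P) : IsLeafIPP A (List.reduceOption '' P) := by
  obtain ⟨hpaths, hcover⟩ := isLeafIPP_iff.1 hP
  refine isLeafIPP_iff.2 ⟨Set.forall_mem_image.2 fun p hp => ?_, fun u =>
    existsUnique_mem_image_of_iff (fun _ _ => List.reduceOption_mem_iff) (hcover (some u))⟩
  exact (hpaths p hp).reduceOption hv (ne_of_mem_of_not_mem hp (hP.singleton_none_notMem hv))

end PendantLeaf

theorem leafIPP_iff_addPendantLeaf_general
    {V : Type*} (A : V → V → Prop)
    (v : V) (hv : IsLeaf A v) :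
    (∃ P : Set (List V), IsLeafIPP A P) ↔
      ∃ P : Set (List (Option V)),
        IsLeafIPP (fun a b : Option V =>
          (∃ u w : V, a = some u ∧ b = some w ∧ A u w) ∨
            (a = some v ∧ b = none)) P := by
  show (∃ P, IsLeafIPP A P) ↔ ∃ P, IsLeafIPP (withPendant A v) P
  exact ⟨fun ⟨_, hP⟩ => ⟨_, hP.image_extendPath hv⟩,
    fun ⟨_, hP⟩ => ⟨_, hP.image_reduceOption hv⟩⟩

/-- Let `N` be a (finite) DAG, let `v` be a leaf of `N`, and
let `N'` be the DAG obtained from `N` by adding a new vertex `v'` together with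
the single arc `(v, v')`.  (Here `N'` lives on `Option V`, the new vertex being
`none`.)  Then `N` admits a leaf induced path partition if and only if `N'`
does. -/
theorem leafIPP_iff_addPendantLeaf
    {V : Type*} [Fintype V] (A : V → V → Prop) (hacy : Acyclic A)
    (v : V) (hv : IsLeaf A v) :
    (∃ P : Set (List V), IsLeafIPP A P) ↔
      ∃ P : Set (List (Option V)),
        IsLeafIPP (fun a b : Option V =>
          (∃ u w : V, a = some u ∧ b = some w ∧ A u w) ∨
            (a = some v ∧ b = none)) P :=
  leafIPP_iff_addPendantLeaf_general A v hv

end Paper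
end

section
/- Every reducible DAG admits a leaf induced path partition. -/
/-!
Finite directed acyclic graphs (DAGs) whose vertex set may shrink under
cherry-picking operations are represented by a pair consisting of a vertex set
`s : Set U` inside an ambient type `U` and an arc relation `A : U → U → Prop`
supported on `s`.
-/

namespace Paper

variable {U : Type*}

/-- `(s, A)` is a finite DAG: the vertex set is finite, arcs join vertices of
`s`, and there is no directed cycle. -/
def IsDag (s : Set U) (A : U → U → Prop) : Prop :=
  s.Finite ∧ (∀ ⦃u v⦄, A u v → u ∈ s ∧ v ∈ s) ∧ ∀ v, ¬ Relation.TransGen A v v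

/-- A leaf of `(s, A)`: a vertex of outdegree 0. -/
def DLeaf (s : Set U) (A : U → U → Prop) (v : U) : Prop :=
  v ∈ s ∧ ∀ w, ¬ A v w

/-- A subdivision vertex of `(s, A)`: indegree 1 and outdegree 1. -/
def IsSubdiv (s : Set U) (A : U → U → Prop) (v : U) : Prop :=
  v ∈ s ∧ (∃! w, A w v) ∧ (∃! w, A v w)

/-- A reticulation of `(s, A)`: a non-leaf vertex of indegree ≥ 2. -/
def Retic (s : Set U) (A : U → U → Prop) (v : U) : Prop :=
  v ∈ s ∧ (∃ w, A v w) ∧ ∃ u w, u ≠ w ∧ A u v ∧ A w v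

/-- `SuppressIf s A w s' A'` holds when `(s', A')` is obtained from `(s, A)` by
suppressing the vertex `w` in case it is a subdivision vertex (deleting it and
adding an arc from its unique in-neighbor to its unique out-neighbor), and by
doing nothing otherwise. -/
def SuppressIf (s : Set U) (A : U → U → Prop) (w : U)
    (s' : Set U) (A' : U → U → Prop) : Prop :=
  (¬ IsSubdiv s A w ∧ s' = s ∧ A' = A) ∨
    (IsSubdiv s A w ∧ ∃ z o, A z w ∧ A w o ∧ s' = s \ {w} ∧
      A' = fun a b => (A a b ∧ a ≠ w ∧ b ≠ w) ∨ (a = z ∧ b = o))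

/-- A standard cherry: a pair of distinct leaves with a common in-neighbor. -/
def StandardCherry (s : Set U) (A : U → U → Prop) (x y : U) : Prop :=
  x ≠ y ∧ DLeaf s A x ∧ DLeaf s A y ∧ ∃ w, A w x ∧ A w y

/-- A reticulated cherry: a pair `(x, y)` of distinct leaves whose respective
in-neighbors `x', y'` are such that `y'` is a reticulation and `(x', y')` is an
arc. -/
def ReticCherry (s : Set U) (A : U → U → Prop) (x y : U) : Prop :=
  x ≠ y ∧ DLeaf s A x ∧ DLeaf s A y ∧
    ∃ x' y', A x' x ∧ A y' y ∧ Retic s A y' ∧ A x' y'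

/-- The cherry-picking operation on a standard cherry `(x, y)`: remove `y` and
its incident arc, and suppress the possible resulting subdivision vertex. -/
def StandardPickAt (s : Set U) (A : U → U → Prop) (x y : U)
    (s' : Set U) (A' : U → U → Prop) : Prop :=
  StandardCherry s A x y ∧
    ∃ w, A w x ∧ A w y ∧
      SuppressIf (s \ {y}) (fun a b => A a b ∧ a ≠ y ∧ b ≠ y) w s' A'

/-- The cherry-picking operation on a reticulated cherry `(x, y)` with
in-neighbors `x', y'`: remove the arc `(x', y')` and suppress the possible
resulting subdivision vertices. -/
def ReticPickAt (s : Set U) (A : U → U → Prop) (x y : U)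
    (s' : Set U) (A' : U → U → Prop) : Prop :=
  ReticCherry s A x y ∧
    ∃ x' y', A x' x ∧ A y' y ∧ Retic s A y' ∧ A x' y' ∧
      ∃ s₁ A₁, SuppressIf s (fun a b => A a b ∧ ¬(a = x' ∧ b = y')) x' s₁ A₁ ∧
        SuppressIf s₁ A₁ y' s' A'

/-- One cherry-picking operation, on some cherry. -/
def CherryStep (N N' : Set U × (U → U → Prop)) : Prop :=
  ∃ x y, StandardPickAt N.1 N.2 x y N'.1 N'.2 ∨ ReticPickAt N.1 N.2 x y N'.1 N'.2

/-- Reachability in the underlying undirected graph (being in the same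
connected component). -/
def UReach (A : U → U → Prop) : U → U → Prop :=
  Relation.ReflTransGen fun a b => A a b ∨ A b a

/-- `(s, A)` is reduced: each connected component contains exactly one arc,
whose endpoints are a root and a leaf. -/
def Reduced (s : Set U) (A : U → U → Prop) : Prop :=
  ∀ v ∈ s, (∃! e : U × U, A e.1 e.2 ∧ UReach A v e.1) ∧
    ∀ a b, A a b → UReach A v a → (∀ w, ¬ A w a) ∧ ∀ w, ¬ A b w

/-- `(s, A)` is reducible: some sequence of cherry-picking operations
transforms it into a reduced DAG. -/
def Reducible (s : Set U) (A : U → U → Prop) : Prop :=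
  ∃ N' : Set U × (U → U → Prop),
    Relation.ReflTransGen CherryStep (s, A) N' ∧ Reduced N'.1 N'.2

/-- A directed path of `(s, A)`: a nonempty list of pairwise distinct vertices
of `s`, consecutive ones joined by arcs. -/
def IsPathOn (s : Set U) (A : U → U → Prop) (p : List U) : Prop :=
  p ≠ [] ∧ p.Nodup ∧ p.Chain' A ∧ ∀ v ∈ p, v ∈ s

/-- An induced directed path of `(s, A)`: the only arcs among its vertices are
the consecutive arcs of the path. -/
def IsInducedPathOn (s : Set U) (A : U → U → Prop) (p : List U) : Prop :=
  IsPathOn s A p ∧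
    ∀ i j : Fin p.length, A (p.get i) (p.get j) → (j : ℕ) = (i : ℕ) + 1

/-- A leaf induced path partition of `(s, A)`: a collection of vertex-disjoint
induced directed paths whose vertex sets partition `s`, each path ending at a
leaf. -/
def IsLeafIPPOn (s : Set U) (A : U → U → Prop) (P : Set (List U)) : Prop :=
  (∀ p ∈ P, IsInducedPathOn s A p) ∧
  (∀ v ∈ s, ∃! p, p ∈ P ∧ v ∈ p) ∧
  ∀ p ∈ P, ∃ x, p.getLast? = some x ∧ DLeaf s A x

/-!
Encode a leaf induced path partition by its successor relation `F ⊆ A` (`IsLeafIPPSucc`):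
`F` is functional and injective, every vertex with an out-arc has an `F`-successor, and an arc
`a → b` with `b` reachable from `a` along `F` is itself in `F`. In a finite DAG the maximal
`F`-chains then form a leaf induced path partition.

For a reduced DAG take `F = A`. A cherry-picking operation is a composite of deleting a leaf,
deleting an arc `(x', y')` and suppressing vertices whose only child is a leaf; all three keep
the graph a DAG whose leaves have indegree 1, and pull successor relations back: a deleted leaf
becomes a one-vertex path, a suppressed vertex is reinserted in front of its child, and if `y'`
comes after `x'` on its path, that path is cut after `x'` and continued to the leaf `x`.
-/

open Relation

structure IsLeafIPPSucc (A F : U → U → Prop) : Prop where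
  le : ∀ ⦃a b⦄, F a b → A a b
  rightUnique : Relator.RightUnique F
  leftUnique : Relator.LeftUnique F
  exists_of_arc : ∀ ⦃a b⦄, A a b → ∃ c, F a c
  of_arc_of_reflTransGen : ∀ ⦃a b⦄, A a b → ReflTransGen F a b → F a b

def IsSinkChain (R : U → U → Prop) (l : List U) : Prop :=
  l.IsChain R ∧ ∀ a ∈ l.getLast?, ∀ b, ¬ R a b

def IsSourceSinkChain (R : U → U → Prop) (l : List U) : Prop :=
  IsSinkChain R l ∧ IsSinkChain (flip R) l.reverse

section Chains

variable {R : U → U → Prop}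

theorem IsSinkChain.cons_of_append {l₁ l₂ : List U} {v : U}
    (h : IsSinkChain R (l₁ ++ v :: l₂)) : IsSinkChain R (v :: l₂) :=
  ⟨h.1.right_of_append, by simpa [List.getLast?_append_of_ne_nil] using h.2⟩

theorem IsSinkChain.eq_of_cons (hR : Relator.RightUnique R) {v : U} {l₁ l₂ : List U}
    (h₁ : IsSinkChain R (v :: l₁)) (h₂ : IsSinkChain R (v :: l₂)) : l₁ = l₂ := by
  induction l₁ generalizing v l₂ with
  | nil =>
    cases l₂ with
    | nil => rfl
    | cons b _ => exact absurd (List.isChain_cons_cons.1 h₂.1).1 (h₁.2 v rfl b)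
  | cons a l₁ ih =>
    cases l₂ with
    | nil => exact absurd (List.isChain_cons_cons.1 h₁.1).1 (h₂.2 v rfl a)
    | cons b l₂ =>
      obtain ⟨hva, h₁'⟩ := List.isChain_cons_cons.1 h₁.1
      obtain ⟨hvb, h₂'⟩ := List.isChain_cons_cons.1 h₂.1
      obtain rfl := hR hva hvb
      exact congrArg _ (ih ⟨h₁', h₁.2⟩ ⟨h₂', h₂.2⟩)

theorem IsSinkChain.reverse_append {v : U} {l₁ l₂ : List U}
    (h₁ : IsSinkChain (flip R) (v :: l₁)) (h₂ : IsSinkChain R (v :: l₂)) :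
    IsSinkChain R (l₁.reverse ++ v :: l₂) := by
  refine ⟨?_, by simpa [List.getLast?_append_of_ne_nil] using h₂.2⟩
  have h₁' : (v :: l₁).reverse.IsChain R := List.isChain_reverse.2 h₁.1
  rw [List.reverse_cons] at h₁'
  simpa using h₁'.append_overlap (l₃ := l₂) (by simpa using h₂.1) (List.cons_ne_nil v [])

theorem IsSourceSinkChain.eq_of_mem (hR : Relator.RightUnique R) (hR' : Relator.LeftUnique R)
    {p q : List U} {v : U} (hp : IsSourceSinkChain R p) (hq : IsSourceSinkChain R q)
    (hvp : v ∈ p) (hvq : v ∈ q) : p = q := by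
  obtain ⟨p₁, p₂, rfl⟩ := List.append_of_mem hvp
  obtain ⟨q₁, q₂, rfl⟩ := List.append_of_mem hvq
  have hp' := hp.2; have hq' := hq.2
  simp only [List.reverse_append, List.reverse_cons, List.append_assoc,
    List.singleton_append] at hp' hq'
  rw [IsSinkChain.eq_of_cons hR hp.1.cons_of_append hq.1.cons_of_append,
    List.reverse_inj.1 (IsSinkChain.eq_of_cons hR'.flip hp'.cons_of_append hq'.cons_of_append)]

theorem exists_isSinkChain_cons {s : Set U} (hs : s.Finite) (hRs : ∀ ⦃a b⦄, R a b → b ∈ s)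
    (hR : ∀ v, ¬ TransGen R v v) (v : U) :
    ∃ l, IsSinkChain R (v :: l) ∧ ∀ u ∈ l, u ∈ s := by
  induction hn : {u | TransGen R v u}.ncard using Nat.strong_induction_on generalizing v with
  | _ n ih =>
    by_cases hv : ∃ w, R v w
    · obtain ⟨w, hvw⟩ := hv
      have hlt : {u | TransGen R w u}.ncard < n := by
        refine hn ▸ Set.ncard_lt_ncard ⟨fun u hu => TransGen.head hvw hu, fun h => hR w (h ?_)⟩
          (hs.subset fun u hu => ?_)
        · exact TransGen.single hvw
        · obtain ⟨c, -, hcu⟩ := TransGen.tail'_iff.1 hu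
          exact hRs hcu
      obtain ⟨l, hl, hls⟩ := ih _ hlt w rfl
      refine ⟨w :: l, ⟨List.isChain_cons_cons.2 ⟨hvw, hl.1⟩, by simpa using hl.2⟩, ?_⟩
      simpa using ⟨hRs hvw, hls⟩
    · simp only [not_exists] at hv
      exact ⟨[], ⟨List.isChain_singleton v, by simpa using hv⟩, by simp⟩

end Chains

section Successor

variable {s : Set U} {A F : U → U → Prop}

theorem IsLeafIPPSucc.not_transGen_self (hdag : IsDag s A) (hF : IsLeafIPPSucc A F) (v : U) :
    ¬ TransGen F v v :=
  fun h => hdag.2.2 v (TransGen.mono hF.le _ _ h)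

theorem IsLeafIPPSucc.isInducedPathOn (hdag : IsDag s A) (hF : IsLeafIPPSucc A F) {p : List U}
    (hne : p ≠ []) (hp : p.IsChain F) (hps : ∀ v ∈ p, v ∈ s) : IsInducedPathOn s A p := by
  have hpw : p.Pairwise (TransGen F) :=
    List.isChain_iff_pairwise.1 (hp.imp fun _ _ => TransGen.single)
  have hnd : p.Nodup := hpw.imp fun {a _} h => by
    rintro rfl
    exact hF.not_transGen_self hdag a h
  refine ⟨⟨hne, hnd, hp.imp hF.le, hps⟩, fun i j hij => ?_⟩
  rcases lt_or_ge (i : ℕ) j with hij' | hji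
  · have hshort : F p[(i : ℕ)] p[(j : ℕ)] := hF.of_arc_of_reflTransGen hij
      (List.pairwise_iff_getElem.1 hpw i j i.2 j.2 hij').to_reflTransGen
    have hnext : F p[(i : ℕ)] p[(i : ℕ) + 1] := List.isChain_iff_getElem.1 hp i (by omega)
    exact hnd.getElem_inj_iff.1 (hF.rightUnique hshort hnext)
  · have hback : ReflTransGen F p[(j : ℕ)] p[(i : ℕ)] := by
      rcases hji.lt_or_eq with hlt | heq
      · exact (List.pairwise_iff_getElem.1 hpw j i j.2 i.2 hlt).to_reflTransGen
      · simp only [heq]; rfl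
    exact (hdag.2.2 _ (TransGen.tail' (ReflTransGen.mono hF.le _ _ hback) hij)).elim

theorem IsLeafIPPSucc.exists_isLeafIPPOn (hdag : IsDag s A) (hF : IsLeafIPPSucc A F) :
    ∃ P, IsLeafIPPOn s A P := by
  refine ⟨{p | p ≠ [] ∧ (∀ v ∈ p, v ∈ s) ∧ IsSourceSinkChain F p}, ?_, fun v hv => ?_, ?_⟩
  · rintro p ⟨hne, hps, hp⟩
    exact hF.isInducedPathOn hdag hne hp.1.1 hps
  · obtain ⟨l₂, hl₂, hl₂s⟩ := exists_isSinkChain_cons hdag.1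
      (fun _ _ h => (hdag.2.1 (hF.le h)).2) (hF.not_transGen_self hdag) v
    obtain ⟨l₁, hl₁, hl₁s⟩ := exists_isSinkChain_cons hdag.1
      (fun _ _ h => (hdag.2.1 (hF.le h)).1)
      (fun v h => hF.not_transGen_self hdag v (TransGen.swap _ _ h)) v
    have hp : IsSourceSinkChain F (l₁.reverse ++ v :: l₂) :=
      ⟨hl₁.reverse_append hl₂, by simpa using hl₂.reverse_append (R := flip F) hl₁⟩
    refine ⟨_, ⟨⟨by simp, ?_, hp⟩, by simp⟩, fun q ⟨⟨_, _, hq⟩, hvq⟩ =>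
      IsSourceSinkChain.eq_of_mem hF.rightUnique hF.leftUnique hq hp hvq (by simp)⟩
    simp only [List.mem_append, List.mem_reverse, List.mem_cons]
    rintro u (hu | rfl | hu)
    exacts [hl₁s u hu, hv, hl₂s u hu]
  · rintro p ⟨hne, hps, hp⟩
    obtain ⟨x, hx⟩ := Option.ne_none_iff_exists'.1 (mt List.getLast?_eq_none_iff.1 hne)
    refine ⟨x, hx, hps x (List.mem_of_getLast? hx), fun b hxb => ?_⟩
    obtain ⟨c, hc⟩ := hF.exists_of_arc hxb
    exact hp.1.2 x hx c hc

end Successor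

theorem IsDag.irrefl {s : Set U} {A : U → U → Prop} (h : IsDag s A) (a : U) : ¬ A a a :=
  fun h' => h.2.2 a (.single h')

theorem IsDag.of_le_transGen {t t' : Set U} {B B' : U → U → Prop} (h : IsDag t B)
    (ht : t' ⊆ t) (hsupp : ∀ ⦃a b⦄, B' a b → a ∈ t' ∧ b ∈ t')
    (hle : ∀ ⦃a b⦄, B' a b → TransGen B a b) : IsDag t' B' :=
  ⟨h.1.subset ht, hsupp, fun v hv => h.2.2 v (TransGen.lift' id hle _ _ hv)⟩

theorem Reduced.isLeafIPPSucc {s : Set U} {A : U → U → Prop} (hred : Reduced s A)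
    (hsupp : ∀ ⦃a b⦄, A a b → a ∈ s ∧ b ∈ s) : IsLeafIPPSucc A A where
  le _ _ h := h
  rightUnique a b c hab hac :=
    congrArg Prod.snd <| (hred a (hsupp hab).1).1.unique (y₁ := (a, b)) (y₂ := (a, c))
      ⟨hab, .refl⟩ ⟨hac, .refl⟩
  leftUnique a b c hac hbc :=
    congrArg Prod.fst <| (hred a (hsupp hac).1).1.unique (y₁ := (a, c)) (y₂ := (b, c))
      ⟨hac, .refl⟩
      ⟨hbc, (ReflTransGen.single (r := fun a b => A a b ∨ A b a) (.inl hac)).tail (.inr hbc)⟩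
  exists_of_arc _ b h := ⟨b, h⟩
  of_arc_of_reflTransGen _ _ h _ := h

def IsDagWithLeafIndegOne (s : Set U) (A : U → U → Prop) : Prop :=
  IsDag s A ∧ ∀ v, DLeaf s A v → ∃! w, A w v

def PullsBackLeafIPPSucc (N N' : Set U × (U → U → Prop)) : Prop :=
  IsDagWithLeafIndegOne N'.1 N'.2 ∧ ∀ F', IsLeafIPPSucc N'.2 F' → ∃ F, IsLeafIPPSucc N.2 F

theorem PullsBackLeafIPPSucc.trans {N N₁ N₂ : Set U × (U → U → Prop)}
    (h₁ : PullsBackLeafIPPSucc N N₁) (h₂ : PullsBackLeafIPPSucc N₁ N₂) :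
    PullsBackLeafIPPSucc N N₂ :=
  ⟨h₂.1, fun _ hF => let ⟨_, hF₁⟩ := h₂.2 _ hF; h₁.2 _ hF₁⟩

section DeleteLeaf

variable {t : Set U} {B F : U → U → Prop} {y w c : U}

theorem IsLeafIPPSucc.of_deleteLeaf (hy : ∀ b, ¬ B y b) (hyw : ∀ a, B a y → a = w)
    (hwc : B w c) (hcy : c ≠ y) (hF : IsLeafIPPSucc (fun a b => B a b ∧ a ≠ y ∧ b ≠ y) F) :
    IsLeafIPPSucc B F where
  le _ _ h := (hF.le h).1
  rightUnique := hF.rightUnique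
  leftUnique := hF.leftUnique
  exists_of_arc a b hab := by
    have hay : a ≠ y := fun h => hy b (h ▸ hab)
    by_cases hby : b = y
    · subst hby
      obtain rfl := hyw a hab
      exact hF.exists_of_arc ⟨hwc, hay, hcy⟩
    · exact hF.exists_of_arc ⟨hab, hay, hby⟩
  of_arc_of_reflTransGen a b hab hr := by
    have hay : a ≠ y := fun h => hy b (h ▸ hab)
    have hby : b ≠ y := by
      rintro rfl
      rcases hr.cases_tail with rfl | ⟨d, -, hdy⟩
      exacts [hay rfl, (hF.le hdy).2.2 rfl]
    exact hF.of_arc_of_reflTransGen ⟨hab, hay, hby⟩ hr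

theorem pullsBackLeafIPPSucc_deleteLeaf (h : IsDagWithLeafIndegOne t B) (hy : DLeaf t B y)
    (hwy : B w y) (hwc : B w c) (hcy : c ≠ y) :
    PullsBackLeafIPPSucc (t, B) (t \ {y}, fun a b => B a b ∧ a ≠ y ∧ b ≠ y) := by
  have hyw : ∀ a, B a y → a = w := fun a ha => (h.2 y hy).unique ha hwy
  refine ⟨⟨h.1.of_le_transGen Set.sdiff_subset (fun a b hab => ?_) (fun a b hab => .single hab.1),
    fun v hv => ?_⟩, fun F hF => ⟨F, hF.of_deleteLeaf hy.2 hyw hwc hcy⟩⟩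
  · exact ⟨⟨(h.1.2.1 hab.1).1, hab.2.1⟩, ⟨(h.1.2.1 hab.1).2, hab.2.2⟩⟩
  have hvB : ∀ b, ¬ B v b := by
    intro b hvb
    by_cases hby : b = y
    · subst hby
      obtain rfl := hyw v hvb
      exact hv.2 c ⟨hwc, hv.1.2, hcy⟩
    · exact hv.2 b ⟨hvb, hv.1.2, hby⟩
  obtain ⟨u, hu, huu⟩ := h.2 v ⟨hv.1.1, hvB⟩
  exact ⟨u, ⟨hu, fun huy => hy.2 v (huy ▸ hu), hv.1.2⟩, fun a ha => huu a ha.1⟩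

end DeleteLeaf

section DeleteArc

variable {t : Set U} {B F : U → U → Prop} {x' y' x c : U}

theorem IsLeafIPPSucc.of_deleteArc_of_not_reflTransGen (hx : B x' x) (hxl : ∀ b, ¬ B x b)
    (hy'c : B y' c) (hF : IsLeafIPPSucc (fun a b => B a b ∧ ¬(a = x' ∧ b = y')) F)
    (hr : ¬ ReflTransGen F x' y') : IsLeafIPPSucc B F where
  le _ _ h := (hF.le h).1
  rightUnique := hF.rightUnique
  leftUnique := hF.leftUnique
  exists_of_arc a b hab := by
    by_cases hab' : a = x' ∧ b = y'
    · obtain ⟨rfl, rfl⟩ := hab'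
      exact hF.exists_of_arc ⟨hx, fun h => hxl c (h.2 ▸ hy'c)⟩
    · exact hF.exists_of_arc ⟨hab, hab'⟩
  of_arc_of_reflTransGen a b hab hab' := by
    by_cases h : a = x' ∧ b = y'
    · obtain ⟨rfl, rfl⟩ := h
      exact absurd hab' hr
    · exact hF.of_arc_of_reflTransGen ⟨hab, h⟩ hab'

theorem reflTransGen_redirect (hxF : ∀ b, ¬ F x b) {a b : U}
    (hab : ReflTransGen (fun a b => (F a b ∧ a ≠ x') ∨ (a = x' ∧ b = x)) a b) :
    b = x ∨ ReflTransGen F a b := by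
  induction hab with
  | refl => exact .inr .refl
  | tail _ hbc ih =>
    rcases hbc with ⟨hbc, -⟩ | ⟨-, rfl⟩
    · rcases ih with rfl | ih
      exacts [(hxF _ hbc).elim, .inr (ih.tail hbc)]
    · exact .inl rfl

theorem IsLeafIPPSucc.of_deleteArc_of_reflTransGen (hirr : ∀ a, ¬ B a a) (hxy : B x' y')
    (hx : B x' x) (hxl : ∀ b, ¬ B x b) (hxu : ∀ a, B a x → a = x') (hy'c : B y' c)
    (hF : IsLeafIPPSucc (fun a b => B a b ∧ ¬(a = x' ∧ b = y')) F)
    (hr : ReflTransGen F x' y') :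
    IsLeafIPPSucc B (fun a b => (F a b ∧ a ≠ x') ∨ (a = x' ∧ b = x)) := by
  -- the only candidate `x'` has `y'`, not the leaf `x`, further along its path
  have hnx : ∀ a, ¬ F a x := by
    intro a hax
    rw [hxu a (hF.le hax).1] at hax
    obtain ⟨d, hxd, hdy⟩ := TransGen.head'_iff.1 <|
      (reflTransGen_iff_eq_or_transGen.1 hr).resolve_left fun h => hirr x' (h ▸ hxy)
    obtain rfl := hF.rightUnique hxd hax
    rcases hdy.cases_head with rfl | ⟨e, hxe, -⟩
    exacts [hxl c hy'c, hxl e (hF.le hxe).1]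
  have hxx' : x ≠ x' := fun h => hxl x (h ▸ hx)
  have hxF : ∀ b, ¬ ((F x b ∧ x ≠ x') ∨ (x = x' ∧ b = x)) := by
    rintro b (⟨h, -⟩ | ⟨h, -⟩)
    exacts [hxl b (hF.le h).1, hxx' h]
  refine ⟨?_, ?_, ?_, fun a b hab => ?_, fun a b hab hab' => ?_⟩
  · rintro a b (⟨h, -⟩ | ⟨rfl, rfl⟩)
    exacts [(hF.le h).1, hx]
  · rintro a b d (⟨hab, ha⟩ | ⟨rfl, rfl⟩) (⟨had, ha'⟩ | ⟨h, rfl⟩)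
    exacts [hF.rightUnique hab had, absurd h ha, (ha' rfl).elim, rfl]
  · rintro a b d (⟨had, -⟩ | ⟨ha, hd⟩) (⟨hbd, -⟩ | ⟨hb, hd'⟩)
    exacts [hF.leftUnique had hbd, (hnx _ (hd' ▸ had)).elim, (hnx _ (hd ▸ hbd)).elim,
      ha.trans hb.symm]
  · by_cases ha : a = x'
    · exact ⟨x, .inr ⟨ha, rfl⟩⟩
    · obtain ⟨d, hd⟩ := hF.exists_of_arc ⟨hab, fun h => ha h.1⟩
      exact ⟨d, .inl ⟨hd, ha⟩⟩
  · by_cases ha : a = x'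
    · rw [ha] at hab hab' ⊢
      rcases hab'.cases_head with rfl | ⟨d, hd, hdb⟩
      · exact (hirr _ hab).elim
      obtain rfl : d = x := hd.elim (fun h => (h.2 rfl).elim) (·.2)
      rcases hdb.cases_head with rfl | ⟨e, he, -⟩
      exacts [.inr ⟨rfl, rfl⟩, (hxF e he).elim]
    · rcases reflTransGen_redirect (fun b h => hxl b (hF.le h).1) hab' with rfl | hr'
      · exact (ha (hxu a hab)).elim
      · exact .inl ⟨hF.of_arc_of_reflTransGen ⟨hab, fun h => ha h.1⟩ hr', ha⟩

theorem pullsBackLeafIPPSucc_deleteArc (h : IsDagWithLeafIndegOne t B) (hxy : B x' y')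
    (hx : DLeaf t B x) (hx'x : B x' x) (hy'c : B y' c) :
    PullsBackLeafIPPSucc (t, B) (t, fun a b => B a b ∧ ¬(a = x' ∧ b = y')) := by
  have hxu : ∀ a, B a x → a = x' := fun a ha => (h.2 x hx).unique ha hx'x
  refine ⟨⟨h.1.of_le_transGen subset_rfl (fun a b hab => h.1.2.1 hab.1)
    (fun a b hab => .single hab.1), fun v hv => ?_⟩, fun F hF => ?_⟩
  · have hvB : ∀ b, ¬ B v b := by
      intro b hvb
      by_cases hb : v = x' ∧ b = y'
      · exact hv.2 x ⟨hb.1 ▸ hx'x, fun h => hx.2 c (h.2 ▸ hy'c)⟩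
      · exact hv.2 b ⟨hvb, hb⟩
    obtain ⟨u, hu, huu⟩ := h.2 v ⟨hv.1, hvB⟩
    exact ⟨u, ⟨hu, fun h' => hvB c (h'.2 ▸ hy'c)⟩, fun a ha => huu a ha.1⟩
  · by_cases hr : ReflTransGen F x' y'
    · exact ⟨_, hF.of_deleteArc_of_reflTransGen h.1.irrefl hxy hx'x hx.2 hxu hy'c hr⟩
    · exact ⟨F, hF.of_deleteArc_of_not_reflTransGen hx'x hx.2 hy'c hr⟩

end DeleteArc

section Suppress

variable {t t' : Set U} {B B' F : U → U → Prop} {z w o : U}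

open Classical in
theorem reflTransGen_suppress (how : o ≠ w) (hzw : z ≠ w) (hFw : ∀ a, ¬ F w a ∧ ¬ F a w)
    {a b : U} (hab : ReflTransGen
      (fun a b => (F a b ∧ b ≠ o) ∨ (a = w ∧ b = o) ∨ (a = z ∧ b = w ∧ F z o)) a b) :
    ReflTransGen F (if a = w then o else a) (if b = w then o else b) := by
  refine ReflTransGen.lift' (fun v => if v = w then o else v) (fun a b hstep => ?_) _ _ hab
  show ReflTransGen F (if a = w then o else a) (if b = w then o else b)
  rcases hstep with ⟨h, -⟩ | ⟨ha, hb⟩ | ⟨ha, hb, hzo⟩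
  · have ha : a ≠ w := fun e => (hFw b).1 (e ▸ h)
    have hb : b ≠ w := fun e => (hFw a).2 (e ▸ h)
    simpa [ha, hb] using ReflTransGen.single h
  · simp only [ha, hb, if_neg how, if_true]
    rfl
  · simpa [ha, hb, hzw] using ReflTransGen.single hzo

theorem IsLeafIPPSucc.of_suppress (hzw : B z w) (hzu : ∀ a, B a w → a = z) (hwo : B w o)
    (hwu : ∀ b, B w b → b = o) (hou : ∀ a, B a o → a = w) (how : o ≠ w) (hzw' : z ≠ w)
    (hF : IsLeafIPPSucc (fun a b => (B a b ∧ a ≠ w ∧ b ≠ w) ∨ (a = z ∧ b = o)) F) :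
    IsLeafIPPSucc B (fun a b => (F a b ∧ b ≠ o) ∨ (a = w ∧ b = o) ∨ (a = z ∧ b = w ∧ F z o)) := by
  have hFw : ∀ a, ¬ F w a ∧ ¬ F a w := fun a =>
    ⟨fun h => by rcases hF.le h with ⟨-, h, -⟩ | ⟨h, -⟩; exacts [h rfl, hzw' h.symm],
     fun h => by rcases hF.le h with ⟨-, -, h⟩ | ⟨-, h⟩; exacts [h rfl, how h.symm]⟩
  have hru := hF.rightUnique
  have hlu := hF.leftUnique
  refine ⟨?_, ?_, ?_, fun a b hab => ?_, fun a b hab hr => ?_⟩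
  · rintro a b (⟨h, hbo⟩ | ⟨rfl, rfl⟩ | ⟨rfl, rfl, -⟩)
    · rcases hF.le h with ⟨h, -⟩ | ⟨-, h⟩
      exacts [h, (hbo h).elim]
    · exact hwo
    · exact hzw
  · intro a b d hab had
    grind [Relator.RightUnique]
  · intro a b d had hbd
    grind [Relator.LeftUnique]
  · by_cases ha : a = w
    · exact ⟨o, .inr (.inl ⟨ha, rfl⟩)⟩
    have hb' : ∃ b', (B a b' ∧ a ≠ w ∧ b' ≠ w) ∨ (a = z ∧ b' = o) := by
      by_cases hb : b = w
      · exact ⟨o, .inr ⟨hzu a (hb ▸ hab), rfl⟩⟩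
      · exact ⟨b, .inl ⟨hab, ha, hb⟩⟩
    obtain ⟨d, hd⟩ := hF.exists_of_arc hb'.choose_spec
    by_cases hdo : d = o
    · subst hdo
      rcases hF.le hd with ⟨h, -⟩ | ⟨rfl, -⟩
      exacts [(ha (hou a h)).elim, ⟨w, .inr (.inr ⟨rfl, rfl, hd⟩)⟩]
    · exact ⟨d, .inl ⟨hd, hdo⟩⟩
  · have hσ := reflTransGen_suppress how hzw' hFw hr
    by_cases ha : a = w
    · exact .inr (.inl ⟨ha, hwu b (ha ▸ hab)⟩)
    by_cases hb : b = w
    · obtain rfl := hzu a (hb ▸ hab)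
      simp only [ha, hb, if_false, if_true] at hσ
      exact .inr (.inr ⟨rfl, hb, hF.of_arc_of_reflTransGen (.inr ⟨rfl, rfl⟩) hσ⟩)
    · have hbo : b ≠ o := fun h => ha (hou a (h ▸ hab))
      simp only [ha, hb, if_false] at hσ
      exact .inl ⟨hF.of_arc_of_reflTransGen (.inl ⟨hab, ha, hb⟩) hσ, hbo⟩

theorem SuppressIf.rel_of_ne (hsup : SuppressIf t B w t' B') {a b : U} (hab : B a b)
    (ha : a ≠ w) (hb : b ≠ w) : B' a b := by
  rcases hsup with ⟨-, -, rfl⟩ | ⟨-, z, o, -, -, -, rfl⟩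
  exacts [hab, .inl ⟨hab, ha, hb⟩]

theorem SuppressIf.dLeaf_of_ne (hsup : SuppressIf t B w t' B') {v : U} (hv : DLeaf t B v)
    (hvw : v ≠ w) : DLeaf t' B' v := by
  rcases hsup with ⟨-, rfl, rfl⟩ | ⟨-, z, o, hzw, -, rfl, rfl⟩
  · exact hv
  · refine ⟨⟨hv.1, hvw⟩, ?_⟩
    rintro b (⟨hvb, -⟩ | ⟨rfl, -⟩)
    exacts [hv.2 b hvb, hv.2 w hzw]

theorem SuppressIf.pullsBackLeafIPPSucc (hsup : SuppressIf t B w t' B')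
    (h : IsDagWithLeafIndegOne t B) (hwo : B w o) (ho : DLeaf t B o) :
    PullsBackLeafIPPSucc (t, B) (t', B') := by
  rcases hsup with ⟨-, rfl, rfl⟩ | ⟨hsub, z, o', hzw, hwo', rfl, rfl⟩
  · exact ⟨h, fun F hF => ⟨F, hF⟩⟩
  obtain rfl : o' = o := hsub.2.2.unique hwo' hwo
  have hzu : ∀ a, B a w → a = z := fun a ha => hsub.2.1.unique ha hzw
  have hwu : ∀ b, B w b → b = o' := fun b hb => hsub.2.2.unique hb hwo'
  have hou : ∀ a, B a o' → a = w := fun a ha => (h.2 o' ho).unique ha hwo'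
  have how : o' ≠ w := by rintro rfl; exact ho.2 _ hwo
  have hzw' : z ≠ w := by rintro rfl; exact how (hwu _ hzw).symm
  refine ⟨⟨h.1.of_le_transGen Set.sdiff_subset ?_ ?_, fun v hv => ?_⟩,
    fun F hF => ⟨_, hF.of_suppress hzw hzu hwo' hwu hou how hzw'⟩⟩
  · rintro a b (⟨hab, ha, hb⟩ | ⟨rfl, rfl⟩)
    exacts [⟨⟨(h.1.2.1 hab).1, ha⟩, ⟨(h.1.2.1 hab).2, hb⟩⟩,
      ⟨⟨(h.1.2.1 hzw).1, hzw'⟩, ⟨(h.1.2.1 hwo').2, how⟩⟩]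
  · rintro a b (⟨hab, -⟩ | ⟨rfl, rfl⟩)
    exacts [.single hab, .head hzw (.single hwo')]
  by_cases hvo : v = o'
  · refine ⟨z, .inr ⟨rfl, hvo⟩, fun a ha => ?_⟩
    rcases ha with ⟨ha, haw, -⟩ | ⟨rfl, -⟩
    exacts [(haw (hou a (hvo ▸ ha))).elim, rfl]
  have hvB : ∀ b, ¬ B v b := by
    intro b hvb
    by_cases hbw : b = w
    · exact hv.2 o' (.inr ⟨hzu v (hbw ▸ hvb), rfl⟩)
    · exact hv.2 b (.inl ⟨hvb, hv.1.2, hbw⟩)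
  obtain ⟨u, hu, huu⟩ := h.2 v ⟨hv.1.1, hvB⟩
  have huw : u ≠ w := fun e => hvo (hwu v (e ▸ hu))
  exact ⟨u, .inl ⟨hu, huw, hv.1.2⟩,
    fun a ha => ha.elim (fun ha => huu a ha.1) fun ha => (hvo ha.2).elim⟩

end Suppress

section CherryPicking

variable {s s' : Set U} {A A' : U → U → Prop} {x y : U}

theorem StandardPickAt.pullsBackLeafIPPSucc (hpick : StandardPickAt s A x y s' A')
    (h : IsDagWithLeafIndegOne s A) : PullsBackLeafIPPSucc (s, A) (s', A') := by
  obtain ⟨⟨hxy, hx, hy, -⟩, w, hwx, hwy, hsup⟩ := hpick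
  have h₁ := pullsBackLeafIPPSucc_deleteLeaf h hy hwy hwx hxy
  have hwy' : w ≠ y := fun e => hy.2 x (e ▸ hwx)
  exact h₁.trans (hsup.pullsBackLeafIPPSucc h₁.1 ⟨hwx, hwy', hxy⟩
    ⟨⟨hx.1, hxy⟩, fun b hb => hx.2 b hb.1⟩)

theorem ReticPickAt.pullsBackLeafIPPSucc (hpick : ReticPickAt s A x y s' A')
    (h : IsDagWithLeafIndegOne s A) : PullsBackLeafIPPSucc (s, A) (s', A') := by
  obtain ⟨⟨-, hx, hy, -⟩, x', y', hx'x, hy'y, -, hx'y', s₁, A₁, hsup₁, hsup₂⟩ := hpick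
  have hxy' : x ≠ y' := fun e => hx.2 y (e ▸ hy'y)
  have hx'y'_ne : x' ≠ y' := fun e => h.1.irrefl y' (e ▸ hx'y')
  have hyx' : y ≠ x' := fun e => hy.2 x (e ▸ hx'x)
  have h₁ := pullsBackLeafIPPSucc_deleteArc h hx'y' hx hx'x hy'y
  have h₂ := hsup₁.pullsBackLeafIPPSucc h₁.1 (o := x) ⟨hx'x, fun e => hxy' e.2⟩
    ⟨hx.1, fun b hb => hx.2 b hb.1⟩
  have hy₁ : DLeaf s₁ A₁ y := hsup₁.dLeaf_of_ne ⟨hy.1, fun b hb => hy.2 b hb.1⟩ hyx'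
  have hy'y₁ : A₁ y' y :=
    hsup₁.rel_of_ne ⟨hy'y, fun e => hx'y'_ne e.1.symm⟩ hx'y'_ne.symm hyx'
  exact h₁.trans (h₂.trans (hsup₂.pullsBackLeafIPPSucc h₂.1 hy'y₁ hy₁))

theorem CherryStep.pullsBackLeafIPPSucc {N N' : Set U × (U → U → Prop)} (h : CherryStep N N')
    (hN : IsDagWithLeafIndegOne N.1 N.2) : PullsBackLeafIPPSucc N N' := by
  obtain ⟨x, y, hpick | hpick⟩ := h
  exacts [hpick.pullsBackLeafIPPSucc hN, hpick.pullsBackLeafIPPSucc hN]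

theorem exists_isLeafIPPSucc_of_reflTransGen {N N' : Set U × (U → U → Prop)}
    (h : ReflTransGen CherryStep N N') (hred : Reduced N'.1 N'.2)
    (hN : IsDagWithLeafIndegOne N.1 N.2) : ∃ F, IsLeafIPPSucc N.2 F := by
  induction h using ReflTransGen.head_induction_on with
  | refl => exact ⟨_, hred.isLeafIPPSucc hN.1.2.1⟩
  | head hstep _ ih =>
    have hpb := hstep.pullsBackLeafIPPSucc hN
    obtain ⟨F, hF⟩ := ih hpb.1
    exact hpb.2 F hF

end CherryPicking

theorem reducible_leafIPP_general
    {U : Type*} (s : Set U) (A : U → U → Prop)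
    (hdag : IsDag s A)
    (hleafdeg : ∀ v, DLeaf s A v → ∃! w, A w v)
    (hred : Reducible s A) :
    ∃ P : Set (List U), IsLeafIPPOn s A P := by
  obtain ⟨N', hseq, hN'⟩ := hred
  obtain ⟨F, hF⟩ := exists_isLeafIPPSucc_of_reflTransGen hseq hN' ⟨hdag, hleafdeg⟩
  exact hF.exists_isLeafIPPOn hdag

/-- Every reducible DAG (with no subdivision vertex, all of
whose leaves have indegree 1) admits a leaf induced path partition. -/
theorem reducible_leafIPP
    {U : Type*} (s : Set U) (A : U → U → Prop)
    (hdag : IsDag s A)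
    (hnosub : ∀ v, ¬ IsSubdiv s A v)
    (hleafdeg : ∀ v, DLeaf s A v → ∃! w, A w v)
    (hred : Reducible s A) :
    ∃ P : Set (List U), IsLeafIPPOn s A P :=
  reducible_leafIPP_general s A hdag hleafdeg hred

end Paper
end

section
/- Let N be a DAG with no subdivision vertex in which all leaves have indegree 1, let (x, y) be a standard cherry of N, and let N' be the DAG obtained from N by the cherry-picking operation on (x, y). If N' admits a leaf induced path partition, then N admits a leaf induced path partition. -/
/-!
Finite directed acyclic graphs (DAGs) whose vertex set may shrink under
cherry-picking operations are represented by a pair consisting of a vertex set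
`s : Set U` inside an ambient type `U` and an arc relation `A : U → U → Prop`
supported on `s`.
-/

namespace Paper

variable {U : Type*}

/-!
The two steps of the cherry-picking operation are undone one at a time. If `w` was suppressed,
its in-neighbour `z` and its child `x` were joined by an arc, and the path through the leaf `x`
has the form `q ++ [x]`; putting `w` back gives `q ++ [w, x]`, which is still induced because in
`N - y` the only neighbours of `w` are `z` (the last vertex of `q`, if any) and `x`, and `w` is
the only in-neighbour of `x`. Then `[y]` is added as a path of its own; no leaf of `N - y` stops
being a leaf, since the only parent of `y` keeps the child `x`.
-/

theorem _root_.List.IsChain.getLast_eq_of_forall_not_rel {R : U → U → Prop} {l : List U}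
    (hl : l.IsChain R) (hne : l ≠ []) {v : U} (hv : v ∈ l) (hsink : ∀ u, ¬ R v u) :
    l.getLast hne = v := by
  obtain ⟨i, hi, rfl⟩ := List.mem_iff_getElem.mp hv
  rw [List.getLast_eq_getElem]
  by_contra hne'
  exact hsink _ (hl.getElem i (by grind))

theorem _root_.List.Nodup.getElem_eq_getLast_iff {l : List U} (hnd : l.Nodup) (hl : l ≠ [])
    {i : ℕ} (hi : i < l.length) : l[i] = l.getLast hl ↔ i + 1 = l.length := by
  rw [List.getLast_eq_getElem, hnd.getElem_inj_iff]
  omega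

theorem _root_.Set.existsUnique_mem_image_of_iff {α β : Type*} {P : Set α} {g : α → β}
    {Q : α → Prop} {R : β → Prop} (h : ∃! a, a ∈ P ∧ Q a) (hg : ∀ a ∈ P, R (g a) ↔ Q a) :
    ∃! b, b ∈ g '' P ∧ R b := by
  obtain ⟨a, ⟨ha, hQ⟩, huniq⟩ := h
  refine ⟨g a, ⟨⟨a, ha, rfl⟩, (hg a ha).2 hQ⟩, ?_⟩
  rintro _ ⟨⟨a', ha', rfl⟩, hR⟩
  rw [huniq a' ⟨ha', (hg a' ha').1 hR⟩]

section InducedPath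

variable {s : Set U} {A : U → U → Prop} {l p : List U} {b : U}

theorem isInducedPathOn_iff_getElem :
    IsInducedPathOn s A p ↔ (p ≠ [] ∧ p.Nodup ∧ p.IsChain A ∧ ∀ v ∈ p, v ∈ s) ∧
      ∀ i j (hi : i < p.length) (hj : j < p.length), A p[i] p[j] → j = i + 1 :=
  and_congr_right fun _ => ⟨fun h i j hi hj => h ⟨i, hi⟩ ⟨j, hj⟩, fun h i j => h i j i.2 j.2⟩

theorem isInducedPathOn_singleton_iff : IsInducedPathOn s A [b] ↔ b ∈ s ∧ ¬ A b b := by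
  simp [isInducedPathOn_iff_getElem]

theorem isInducedPathOn_append_singleton_iff (hl : l ≠ []) :
    IsInducedPathOn s A (l ++ [b]) ↔ IsInducedPathOn s A l ∧ b ∈ s ∧ b ∉ l ∧ ¬ A b b ∧
      (∀ a ∈ l, ¬ A b a) ∧ ∀ a ∈ l, (A a b ↔ a = l.getLast hl) := by
  simp only [isInducedPathOn_iff_getElem, List.getElem_append, List.getElem_singleton,
    List.length_append, List.length_singleton, List.nodup_append, List.isChain_append,
    List.getLast?_eq_some_getLast hl]
  constructor
  · rintro ⟨⟨-, ⟨hndl, -, hdisj⟩, ⟨hcl, -, hrel⟩, hs⟩, hind⟩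
    refine ⟨⟨⟨hl, hndl, hcl, fun v hv => hs v (List.mem_append_left _ hv)⟩,
      fun i j hi hj h => hind i j (by omega) (by omega) (by simpa [hi, hj] using h)⟩,
      hs b (by simp), fun hb => hdisj b hb b (by simp) rfl, fun h => ?_, ?_, ?_⟩
    · have := hind l.length l.length (by omega) (by omega) (by simpa using h)
      omega
    · intro a ha h
      obtain ⟨j, hj, rfl⟩ := List.mem_iff_getElem.1 ha
      have := hind l.length j (by omega) (by omega) (by simpa [hj] using h)
      omega
    · intro a ha
      obtain ⟨i, hi, rfl⟩ := List.mem_iff_getElem.1 ha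
      rw [hndl.getElem_eq_getLast_iff hl hi]
      refine ⟨fun h => (hind i l.length (by omega) (by omega) (by simpa [hi] using h)).symm,
        fun h => ?_⟩
      rw [(hndl.getElem_eq_getLast_iff hl hi).2 h]
      exact hrel _ rfl b rfl
  · rintro ⟨⟨⟨-, hndl, hcl, hs⟩, hind⟩, hbs, hbl, hbb, hout, hin⟩
    refine ⟨⟨by simp, ⟨hndl, by simp, ?_⟩, ⟨hcl, List.isChain_singleton b, ?_⟩, ?_⟩, ?_⟩
    · rintro a ha _ hb rfl
      exact hbl (by simpa [List.mem_singleton.1 hb] using ha)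
    · rintro a ha _ hb
      obtain rfl := Option.some_inj.1 ha
      obtain rfl := Option.some_inj.1 hb
      exact (hin _ (List.getLast_mem hl)).2 rfl
    · intro v hv
      rcases List.mem_append.1 hv with hv | hv
      exacts [hs v hv, (List.mem_singleton.1 hv) ▸ hbs]
    · intro i j hi hj h
      by_cases hil : i < l.length <;> by_cases hjl : j < l.length <;>
        simp only [hil, hjl, dite_true, dite_false] at h
      · exact hind i j hil hjl h
      · have := (hndl.getElem_eq_getLast_iff hl hil).1 ((hin _ (List.getElem_mem hil)).1 h)
        omega
      · exact absurd h (hout _ (List.getElem_mem hjl))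
      · exact absurd h hbb

theorem IsInducedPathOn.of_forall_mem_iff {s' : Set U} {A' : U → U → Prop}
    (hp : IsInducedPathOn s' A' p) (hs : ∀ v ∈ p, v ∈ s)
    (hA : ∀ a ∈ p, ∀ b ∈ p, A a b ↔ A' a b) : IsInducedPathOn s A p := by
  obtain ⟨⟨hne, hnd, hc, -⟩, hind⟩ := hp
  refine ⟨⟨hne, hnd, ?_, hs⟩, fun i j hij => hind i j ?_⟩
  · exact List.IsChain.imp_of_mem_imp (fun a b ha hb => (hA a ha b hb).2) hc
  · exact (hA _ (List.get_mem p i) _ (List.get_mem p j)).1 hij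

theorem suppressed_arc_iff {w z o a b : U} (ha : a ≠ w) (hb : b ≠ w) (hbo : b ≠ o) :
    ((A a b ∧ a ≠ w ∧ b ≠ w) ∨ (a = z ∧ b = o)) ↔ A a b := by
  refine ⟨?_, fun h => Or.inl ⟨h, ha, hb⟩⟩
  rintro (⟨h, -⟩ | ⟨-, rfl⟩)
  exacts [h, absurd rfl hbo]

theorem IsInducedPathOn.insert_before_last {w z o : U} {q : List U} (hw : IsSubdiv s A w)
    (hzw : A z w) (hwo : A w o) (ho : DLeaf s A o) (hoin : ∀ u, A u o → u = w)
    (hq : IsInducedPathOn (s \ {w}) (fun a b => (A a b ∧ a ≠ w ∧ b ≠ w) ∨ (a = z ∧ b = o))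
      (q ++ [o])) :
    IsInducedPathOn s A (q ++ [w, o]) := by
  have hwin : ∀ u, A u w → u = z := fun u hu => hw.2.1.unique hu hzw
  have hww : ¬ A w w := fun h => ho.2 o (hw.2.2.unique h hwo ▸ hwo)
  have hoq : o ∉ q := fun h => (List.nodup_append.1 hq.1.2.1).2.2 o h o (by simp) rfl
  have hqw : IsInducedPathOn s A (q ++ [w]) := by
    rcases eq_or_ne q [] with rfl | hqne
    · exact isInducedPathOn_singleton_iff.2 ⟨hw.1, hww⟩
    obtain ⟨hqind, -, -, -, -, hin⟩ := (isInducedPathOn_append_singleton_iff hqne).1 hq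
    have hqs : ∀ v ∈ q, v ∈ s ∧ v ≠ w := fun v hv => hqind.1.2.2.2 v hv
    have hlast : q.getLast hqne = z := by
      rcases (hin _ (List.getLast_mem hqne)).2 rfl with ⟨h, hne, -⟩ | ⟨h, -⟩
      exacts [absurd (hoin _ h) hne, h]
    refine (isInducedPathOn_append_singleton_iff hqne).2 ⟨?_, hw.1, fun h => (hqs w h).2 rfl,
      hww, fun a ha h => hoq (hw.2.2.unique h hwo ▸ ha), fun a _ => ?_⟩
    · refine hqind.of_forall_mem_iff (fun v hv => (hqs v hv).1) fun a ha b hb => ?_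
      exact (suppressed_arc_iff (hqs a ha).2 (hqs b hb).2 (ne_of_mem_of_not_mem hb hoq)).symm
    · rw [hlast]
      exact ⟨hwin a, fun h => h ▸ hzw⟩
  have hwo' : w ≠ o := fun h => ho.2 o (h ▸ hwo)
  simpa using (isInducedPathOn_append_singleton_iff (by simp)).2 ⟨hqw, ho.1,
    by simp [hoq, hwo'.symm], ho.2 o, fun a _ => ho.2 a,
    fun a _ => by simpa using ⟨hoin a, fun h => h ▸ hwo⟩⟩

end InducedPath

section LeafIPP

variable {s : Set U} {A : U → U → Prop} {P : Set (List U)}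

theorem IsLeafIPPOn.insert_singleton {y : U}
    (hP : IsLeafIPPOn (s \ {y}) (fun a b => A a b ∧ a ≠ y ∧ b ≠ y) P) (hy : DLeaf s A y)
    (hpar : ∀ v, A v y → ∃ u ≠ y, A v u) : IsLeafIPPOn s A (insert [y] P) := by
  obtain ⟨hind, hpart, hleaf⟩ := hP
  have hPy : ∀ t ∈ P, ∀ v ∈ t, v ∈ s ∧ v ≠ y := fun t ht v hv => (hind t ht).1.2.2.2 v hv
  refine ⟨?_, fun v hv => ?_, ?_⟩
  · rintro t (rfl | ht)
    · exact isInducedPathOn_singleton_iff.2 ⟨hy.1, hy.2 y⟩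
    · refine (hind t ht).of_forall_mem_iff (fun v hv => (hPy t ht v hv).1) fun a ha b hb => ?_
      exact ⟨fun h => ⟨h, (hPy t ht a ha).2, (hPy t ht b hb).2⟩, And.left⟩
  · by_cases hvy : v = y
    · subst hvy
      refine ⟨[v], ⟨Set.mem_insert _ _, List.mem_singleton_self _⟩, ?_⟩
      rintro t ⟨rfl | ht, hvt⟩
      · rfl
      · exact absurd rfl (hPy t ht v hvt).2
    · obtain ⟨t, ⟨ht, hvt⟩, huniq⟩ := hpart v ⟨hv, hvy⟩
      refine ⟨t, ⟨Or.inr ht, hvt⟩, ?_⟩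
      rintro t' ⟨rfl | ht', hvt'⟩
      · exact absurd (List.mem_singleton.1 hvt') hvy
      · exact huniq t' ⟨ht', hvt'⟩
  · rintro t (rfl | ht)
    · exact ⟨y, rfl, hy⟩
    · obtain ⟨v, hlast, ⟨hvs, hvy⟩, hvleaf⟩ := hleaf t ht
      refine ⟨v, hlast, hvs, fun u hvu => ?_⟩
      by_cases huy : u = y
      · subst huy
        obtain ⟨u, huy, hvu⟩ := hpar v hvu
        exact hvleaf u ⟨hvu, hvy, huy⟩
      · exact hvleaf u ⟨hvu, hvy, huy⟩

theorem IsLeafIPPOn.exists_of_suppressed {w z o : U} (hw : IsSubdiv s A w)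
    (hzw : A z w) (hwo : A w o) (ho : DLeaf s A o) (hoin : ∀ u, A u o → u = w)
    (hP : IsLeafIPPOn (s \ {w}) (fun a b => (A a b ∧ a ≠ w ∧ b ≠ w) ∨ (a = z ∧ b = o)) P) :
    ∃ P, IsLeafIPPOn s A P := by
  classical
  obtain ⟨hind, hpart, hleaf⟩ := hP
  have hPw : ∀ t ∈ P, ∀ v ∈ t, v ∈ s ∧ v ≠ w := fun t ht v hv => (hind t ht).1.2.2.2 v hv
  have ho₂ : o ∈ s \ {w} ∧ ∀ u, ¬ ((A o u ∧ o ≠ w ∧ u ≠ w) ∨ (o = z ∧ u = o)) := by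
    refine ⟨⟨ho.1, fun h => ho.2 o (h ▸ hwo)⟩, ?_⟩
    rintro u (⟨h, -⟩ | ⟨rfl, -⟩)
    exacts [ho.2 u h, ho.2 w hzw]
  obtain ⟨p, ⟨hpP, hop⟩, hpuniq⟩ := hpart o ho₂.1
  obtain ⟨⟨hpne, -, hpc, -⟩, -⟩ := hind p hpP
  obtain ⟨q, rfl⟩ : ∃ q, p = q ++ [o] :=
    ⟨p.dropLast, by rw [← hpc.getLast_eq_of_forall_not_rel hpne hop ho₂.2,
      List.dropLast_append_getLast]⟩
  refine ⟨(fun t => if o ∈ t then q ++ [w, o] else t) '' P, ?_, fun v hv => ?_, ?_⟩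
  · rintro _ ⟨t, ht, rfl⟩
    by_cases hot : o ∈ t
    · simp only [hot, ↓reduceIte]
      exact (hind _ hpP).insert_before_last hw hzw hwo ho hoin
    · simp only [hot, ↓reduceIte]
      refine (hind t ht).of_forall_mem_iff (fun v hv => (hPw t ht v hv).1) fun a ha b hb => ?_
      exact (suppressed_arc_iff (hPw t ht a ha).2 (hPw t ht b hb).2
        (ne_of_mem_of_not_mem hb hot)).symm
  · by_cases hvw : v = w
    · rw [hvw]
      refine Set.existsUnique_mem_image_of_iff (hpart o ho₂.1) fun t ht => ?_
      by_cases hot : o ∈ t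
      · simp [hot]
      · simpa [hot] using fun h => (hPw t ht w h).2 rfl
    · refine Set.existsUnique_mem_image_of_iff (hpart v ⟨hv, hvw⟩) fun t ht => ?_
      by_cases hot : o ∈ t
      · obtain rfl := hpuniq t ⟨ht, hot⟩
        simp [hvw]
      · simp [hot]
  · rintro _ ⟨t, ht, rfl⟩
    by_cases hot : o ∈ t
    · exact ⟨o, by simp [hot], ho⟩
    obtain ⟨v, hlast, ⟨hvs, hvw⟩, hvleaf⟩ := hleaf t ht
    refine ⟨v, by simpa [hot] using hlast, hvs, fun u hvu => ?_⟩
    by_cases huw : u = w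
    · subst huw
      exact hvleaf o (Or.inr ⟨hw.2.1.unique hvu hzw, rfl⟩)
    · exact hvleaf u (Or.inl ⟨hvu, hvw, huw⟩)

end LeafIPP

theorem standardPick_leafIPP_general
    {U : Type*} (s : Set U) (A : U → U → Prop)
    (hleafdeg : ∀ v, DLeaf s A v → ∃! w, A w v)
    (x y : U) (s' : Set U) (A' : U → U → Prop)
    (hpick : StandardPickAt s A x y s' A')
    (h : ∃ P : Set (List U), IsLeafIPPOn s' A' P) :
    ∃ P : Set (List U), IsLeafIPPOn s A P := by
  obtain ⟨P', hP'⟩ := h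
  obtain ⟨⟨hxy, hx, hy, -⟩, w, hwx, hwy, hsup⟩ := hpick
  have hparent : ∀ {u v}, DLeaf s A v → A u v → A w v → u = w :=
    fun hv huv hwv => (hleafdeg _ hv).unique huv hwv
  have hwy_ne : w ≠ y := by
    rintro rfl
    exact hy.2 x hwx
  obtain ⟨P, hP⟩ : ∃ P, IsLeafIPPOn (s \ {y}) (fun a b => A a b ∧ a ≠ y ∧ b ≠ y) P := by
    rcases hsup with ⟨-, rfl, rfl⟩ | ⟨hsub, z, o, hzw, hwo, rfl, rfl⟩
    · exact ⟨P', hP'⟩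
    · obtain rfl : o = x := hsub.2.2.unique hwo ⟨hwx, hwy_ne, hxy⟩
      exact hP'.exists_of_suppressed hsub hzw hwo ⟨⟨hx.1, hxy⟩, fun u h => hx.2 u h.1⟩
        (fun u hu => hparent hx hu.1 hwx)
  exact ⟨_, hP.insert_singleton hy fun v hvy => ⟨x, hxy, hparent hy hvy hwy ▸ hwx⟩⟩

/-- Let `N = (s, A)` be a DAG with no subdivision vertex in
which all leaves have indegree 1, let `(x, y)` be a standard cherry of `N`, and
let `N' = (s', A')` be the DAG obtained from `N` by the cherry-picking
operation on `(x, y)`.  If `N'` admits a leaf induced path partition, then so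
does `N`. -/
theorem standardPick_leafIPP
    {U : Type*} (s : Set U) (A : U → U → Prop)
    (hdag : IsDag s A)
    (hnosub : ∀ v, ¬ IsSubdiv s A v)
    (hleafdeg : ∀ v, DLeaf s A v → ∃! w, A w v)
    (x y : U) (s' : Set U) (A' : U → U → Prop)
    (hpick : StandardPickAt s A x y s' A')
    (h : ∃ P : Set (List U), IsLeafIPPOn s' A' P) :
    ∃ P : Set (List U), IsLeafIPPOn s A P :=
  standardPick_leafIPP_general s A hleafdeg x y s' A' hpick h

end Paper
end

section
/- Let N be a DAG with no subdivision vertex in which all leaves have indegree 1, let (x, y) be a reticulated cherry of N, and let N' be the DAG obtained from N by the cherry-picking operation on (x, y). If N' admits a leaf induced path partition, then N admits a leaf induced path partition. -/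
namespace List

variable {α : Type*}

theorem IsInfix.pair_left_mem {a b : α} {l : List α} (h : [a, b] <:+: l) : a ∈ l :=
  h.subset (by simp)

theorem IsInfix.pair_right_mem {a b : α} {l : List α} (h : [a, b] <:+: l) : b ∈ l :=
  h.subset (by simp)

theorem pair_infix_cons_iff {a b c : α} {l : List α} :
    [a, b] <:+: c :: l ↔ (c = a ∧ l.head? = some b) ∨ [a, b] <:+: l := by
  rw [infix_cons_iff]
  cases l <;> simp [cons_prefix_cons]; tauto

theorem pair_infix_append_iff {a b : α} {l₁ l₂ : List α} :
    [a, b] <:+: l₁ ++ l₂ ↔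
      [a, b] <:+: l₁ ∨ [a, b] <:+: l₂ ∨ (l₁.getLast? = some a ∧ l₂.head? = some b) := by
  induction l₁ with
  | nil => simp
  | cons c l ih =>
    rw [cons_append, pair_infix_cons_iff, ih, pair_infix_cons_iff]
    cases l <;> simp <;> tauto

theorem pair_infix_append_cons_iff {a b c : α} {l₁ l₂ : List α} :
    [a, b] <:+: l₁ ++ c :: l₂ ↔
      [a, b] <:+: l₁ ∨ [a, b] <:+: c :: l₂ ∨ (l₁.getLast? = some a ∧ b = c) := by
  simp [pair_infix_append_iff, eq_comm]

theorem pair_infix_append_singleton_iff {a b c : α} {l : List α} :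
    [a, b] <:+: l ++ [c] ↔ [a, b] <:+: l ∨ (l.getLast? = some a ∧ b = c) := by
  have : ¬ [a, b] <:+: [c] := fun h => by simpa using h.length_le
  simp [pair_infix_append_cons_iff, this]

theorem pair_infix_iff_getElem {a b : α} {l : List α} :
    [a, b] <:+: l ↔ ∃ i, ∃ h : i + 1 < l.length, l[i] = a ∧ l[i + 1] = b := by
  rw [infix_iff_getElem?]
  constructor
  · rintro ⟨k, -, h⟩
    obtain ⟨_, h0⟩ := getElem?_eq_some_iff.mp (h 0 (by simp))
    obtain ⟨hk, h1⟩ := getElem?_eq_some_iff.mp (h 1 (by simp))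
    exact ⟨k, by omega, by simpa using h0, by simpa [Nat.add_comm] using h1⟩
  · rintro ⟨i, hi, rfl, rfl⟩
    refine ⟨i, by simp; omega, fun j hj => ?_⟩
    simp only [length_cons, length_nil] at hj
    interval_cases j <;> simp [Nat.add_comm, hi, Nat.lt_of_succ_lt hi]

theorem Nodup.pair_infix_iff_head? {a b : α} {l₁ l₂ : List α} (hnd : (l₁ ++ a :: l₂).Nodup) :
    [a, b] <:+: l₁ ++ a :: l₂ ↔ l₂.head? = some b := by
  refine ⟨fun h => ?_, fun h => ?_⟩
  · rw [nodup_middle, nodup_cons, mem_append, not_or] at hnd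
    rcases pair_infix_append_cons_iff.mp h with h | h | ⟨h, -⟩
    · exact absurd h.pair_left_mem hnd.1.1
    · rcases pair_infix_cons_iff.mp h with ⟨-, h⟩ | h
      · exact h
      · exact absurd h.pair_left_mem hnd.1.2
    · exact absurd (mem_of_getLast? h) hnd.1.1
  · obtain ⟨l₂, rfl⟩ := head?_eq_some_iff.mp h
    exact ⟨l₁, l₂, by simp⟩

theorem Nodup.pair_infix_iff_getLast? {a b : α} {l₁ l₂ : List α} (hnd : (l₁ ++ b :: l₂).Nodup) :
    [a, b] <:+: l₁ ++ b :: l₂ ↔ l₁.getLast? = some a := by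
  refine ⟨fun h => ?_, fun h => ?_⟩
  · rw [nodup_middle, nodup_cons, mem_append, not_or] at hnd
    rcases pair_infix_append_cons_iff.mp h with h | h | ⟨h, -⟩
    · exact absurd h.pair_right_mem hnd.1.1
    · rcases pair_infix_cons_iff.mp h with ⟨-, h⟩ | h
      · exact absurd (mem_of_mem_head? h) hnd.1.2
      · exact absurd h.pair_right_mem hnd.1.2
    · exact h
  · obtain ⟨l₁, rfl⟩ := getLast?_eq_some_iff.mp h
    exact ⟨l₁, l₂, by simp⟩

theorem Nodup.pair_infix_insert_iff {a b c v : α} {l r : List α} (hnd : (l ++ c :: r).Nodup)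
    (ha : a ≠ v) (hb : b ≠ v) :
    [a, b] <:+: l ++ v :: c :: r ↔ [a, b] <:+: l ++ c :: r ∧ ¬(l.getLast? = some a ∧ b = c) := by
  rw [nodup_middle, nodup_cons, mem_append, not_or] at hnd
  have hl : [a, b] <:+: l → b ≠ c := fun h hbc => hnd.1.1 (hbc ▸ h.pair_right_mem)
  have hr : [a, b] <:+: c :: r → b ≠ c := by
    intro h hbc
    rcases pair_infix_cons_iff.mp h with ⟨-, h⟩ | h
    exacts [hnd.1.2 (hbc ▸ mem_of_mem_head? h), hnd.1.2 (hbc ▸ h.pair_right_mem)]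
  rw [pair_infix_append_cons_iff, pair_infix_cons_iff, pair_infix_append_cons_iff, head?_cons,
    Option.some_inj]
  have := ha.symm
  tauto

theorem Nodup.pair_infix_of_infix {a b : α} {l w : List α} (hnd : l.Nodup) (hw : w <:+: l)
    (ha : a ∈ w) (hb : b ∈ w) (h : [a, b] <:+: l) : [a, b] <:+: w := by
  obtain ⟨l₁, l₂, rfl⟩ := hw
  have hd₁ := disjoint_of_nodup_append hnd.of_append_left
  have hd₂ := disjoint_of_nodup_append hnd
  rcases pair_infix_append_iff.mp h with h | h | ⟨-, h⟩
  · rcases pair_infix_append_iff.mp h with h | h | ⟨h, -⟩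
    · exact absurd ha (hd₁ h.pair_left_mem)
    · exact h
    · exact absurd ha (hd₁ (mem_of_getLast? h))
  · exact absurd h.pair_right_mem (hd₂ (mem_append_right _ hb))
  · exact absurd (mem_of_mem_head? h) (hd₂ (mem_append_right _ hb))

end List

namespace Paper

variable {U : Type*}

def IsInducedChain (A : U → U → Prop) (p : List U) : Prop :=
  ∀ u ∈ p, ∀ v ∈ p, A u v ↔ [u, v] <:+: p

theorem isInducedPathOn_iff {s : Set U} {A : U → U → Prop} {p : List U} :
    IsInducedPathOn s A p ↔ p ≠ [] ∧ p.Nodup ∧ (∀ v ∈ p, v ∈ s) ∧ IsInducedChain A p := by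
  unfold IsInducedPathOn IsPathOn IsInducedChain
  refine ⟨fun ⟨⟨hne, hnd, hch, hs⟩, hind⟩ => ⟨hne, hnd, hs, fun u hu v hv => ?_⟩,
    fun ⟨hne, hnd, hs, hind⟩ => ⟨⟨hne, hnd, ?_, hs⟩, fun i j hij => ?_⟩⟩
  · obtain ⟨i, hi, rfl⟩ := List.mem_iff_getElem.mp hu
    obtain ⟨j, hj, rfl⟩ := List.mem_iff_getElem.mp hv
    rw [List.pair_infix_iff_getElem]
    constructor
    · intro h
      obtain rfl : j = i + 1 := hind ⟨i, hi⟩ ⟨j, hj⟩ h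
      exact ⟨i, hj, rfl, rfl⟩
    · rintro ⟨k, hk, hki, hkj⟩
      rw [hnd.getElem_inj_iff] at hki hkj
      subst hki hkj
      exact List.isChain_iff_getElem.mp hch k hk
  · refine List.isChain_iff_getElem.mpr fun i hi => ?_
    exact (hind _ (List.getElem_mem _) _ (List.getElem_mem _)).mpr
      (List.pair_infix_iff_getElem.mpr ⟨i, hi, rfl, rfl⟩)
  · obtain ⟨k, hk, hki, hkj⟩ := List.pair_infix_iff_getElem.mp
      ((hind _ (List.get_mem p i) _ (List.get_mem p j)).mp hij)
    simp only [List.get_eq_getElem, hnd.getElem_inj_iff] at hki hkj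
    omega

namespace IsInducedChain

variable {A B : U → U → Prop} {p : List U}

theorem rel (h : IsInducedChain A p) {a b : U} (hab : [a, b] <:+: p) : A a b :=
  (h a hab.pair_left_mem b hab.pair_right_mem).mpr hab

theorem isChain (h : IsInducedChain A p) : p.IsChain A :=
  List.isChain_iff_forall_rel_of_append_cons_cons.mpr fun _ _ l₁ l₂ hp =>
    h.rel ⟨l₁, l₂, by simp [hp]⟩

theorem transGen {l₁ l₂ : List U} (h : IsInducedChain A (l₁ ++ l₂)) {a b : U} (ha : a ∈ l₁)
    (hb : b ∈ l₂) : Relation.TransGen A a b :=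
  (List.pairwise_append.mp (h.isChain.imp fun _ _ => .single).pairwise).2.2 a ha b hb

theorem congr (h : IsInducedChain B p) (hAB : ∀ u ∈ p, ∀ v ∈ p, A u v ↔ B u v) :
    IsInducedChain A p :=
  fun u hu v hv => (hAB u hu v hv).trans (h u hu v hv)

theorem of_infix (h : IsInducedChain A p) (hnd : p.Nodup) {w : List U} (hw : w <:+: p) :
    IsInducedChain A w :=
  fun u hu v hv => (h u (hw.subset hu) v (hw.subset hv)).trans
    ⟨hnd.pair_infix_of_infix hw hu hv, fun huv => huv.trans hw⟩

theorem eq_append_singleton_of_leaf (h : IsInducedChain A p) {c : U} (hc : c ∈ p)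
    (hleaf : ∀ b, ¬ A c b) : ∃ l, p = l ++ [c] := by
  obtain ⟨l₁, l₂, rfl⟩ := List.append_of_mem hc
  rcases l₂ with _ | ⟨b, l₂⟩
  · exact ⟨l₁, rfl⟩
  · exact absurd (h.rel ⟨l₁, l₂, by simp⟩) (hleaf b)

theorem eq_singleton_of_leaf (h : IsInducedChain A p) {c : U} (hc : c ∈ p)
    (hleaf : ∀ b, ¬ A c b) (hin : ∀ a ∈ p, ¬ A a c) : p = [c] := by
  obtain ⟨l, rfl⟩ := h.eq_append_singleton_of_leaf hc hleaf
  rcases List.eq_nil_or_concat l with rfl | ⟨l, a, rfl⟩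
  · rfl
  · exact absurd (h.rel ⟨l, [], by simp⟩) (hin a (by simp))

theorem append_leaf (h : IsInducedChain A p) {u x : U} (hlast : p.getLast? = some u)
    (hux : A u x) (hin : ∀ a ∈ p, A a x → a = u) (hleaf : ∀ b, ¬ A x b) (hxp : x ∉ p) :
    IsInducedChain A (p ++ [x]) := by
  have hup : u ∈ p := List.mem_of_getLast? hlast
  intro a ha b hb
  rw [List.pair_infix_append_singleton_iff, hlast, Option.some_inj]
  simp only [List.mem_append, List.mem_singleton] at ha hb
  rcases ha with ha | rfl
  · rcases hb with hb | rfl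
    · rw [h a ha b hb]
      exact ⟨Or.inl, by rintro (h | ⟨-, rfl⟩); exacts [h, absurd hb hxp]⟩
    · exact ⟨fun hax => .inr ⟨(hin a ha hax).symm, rfl⟩,
        by rintro (h | ⟨rfl, -⟩); exacts [absurd h.pair_right_mem hxp, hux]⟩
  · exact ⟨fun hxb => absurd hxb (hleaf b),
      by rintro (h | ⟨rfl, -⟩); exacts [absurd h.pair_left_mem hxp, absurd hup hxp]⟩

end IsInducedChain

namespace IsInducedPathOn

variable {s : Set U} {A : U → U → Prop} {p : List U}

theorem of_infix (hp : IsInducedPathOn s A p) {w : List U} (hw : w <:+: p) (hne : w ≠ []) :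
    IsInducedPathOn s A w := by
  obtain ⟨-, hnd, hs, hc⟩ := isInducedPathOn_iff.mp hp
  exact isInducedPathOn_iff.mpr
    ⟨hne, hnd.sublist hw.sublist, fun v hv => hs v (hw.subset hv), hc.of_infix hnd hw⟩

theorem append_leaf (hp : IsInducedPathOn s A p) {u x : U} (hlast : p.getLast? = some u)
    (hux : A u x) (hin : ∀ a ∈ p, A a x → a = u) (hx : DLeaf s A x) (hxp : x ∉ p) :
    IsInducedPathOn s A (p ++ [x]) := by
  obtain ⟨-, hnd, hs, hc⟩ := isInducedPathOn_iff.mp hp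
  refine isInducedPathOn_iff.mpr ⟨by simp, by simpa using hnd.concat hxp, fun v hv => ?_,
    hc.append_leaf hlast hux hin hx.2 hxp⟩
  rcases List.mem_append.mp hv with hv | hv
  · exact hs v hv
  · exact List.mem_singleton.mp hv ▸ hx.1

end IsInducedPathOn

theorem existsUnique_mem_diff_union {s t : Set U} {P R Q : Set (List U)}
    (hP : ∀ v ∈ s, ∃! p, p ∈ P ∧ v ∈ p) (hR : R ⊆ P) (ht : ∀ v ∈ t, ∀ p ∈ P, v ∉ p)
    (hQ : ∀ v, (∃ q ∈ Q, v ∈ q) ↔ (∃ p ∈ R, v ∈ p) ∨ v ∈ t)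
    (hQdisj : ∀ v, ∀ q₁ ∈ Q, ∀ q₂ ∈ Q, v ∈ q₁ → v ∈ q₂ → q₁ = q₂) :
    ∀ v ∈ s ∪ t, ∃! p, p ∈ P \ R ∪ Q ∧ v ∈ p := by
  intro v hv
  by_cases hvQ : ∃ q ∈ Q, v ∈ q
  · obtain ⟨q, hq, hvq⟩ := hvQ
    refine ⟨q, ⟨.inr hq, hvq⟩, ?_⟩
    rintro p ⟨⟨hpP, hpR⟩ | hp, hvp⟩
    · have hvs : v ∈ s := hv.resolve_right fun hvt => ht v hvt p hpP hvp
      rcases (hQ v).mp ⟨q, hq, hvq⟩ with ⟨p', hp'R, hvp'⟩ | hvt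
      · exact absurd ((hP v hvs).unique ⟨hpP, hvp⟩ ⟨hR hp'R, hvp'⟩ ▸ hp'R) hpR
      · exact absurd hvp (ht v hvt p hpP)
    · exact hQdisj v p hp q hq hvp hvq
  · have hvR : ¬ ∃ p ∈ R, v ∈ p := fun h => hvQ ((hQ v).mpr (.inl h))
    have hvs : v ∈ s := hv.resolve_right fun hvt => hvQ ((hQ v).mpr (.inr hvt))
    obtain ⟨p, ⟨hpP, hvp⟩, huniq⟩ := hP v hvs
    refine ⟨p, ⟨.inl ⟨hpP, fun hpR => hvR ⟨p, hpR, hvp⟩⟩, hvp⟩, ?_⟩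
    rintro p' ⟨⟨hp'P, -⟩ | hp', hvp'⟩
    · exact huniq p' ⟨hp'P, hvp'⟩
    · exact absurd ⟨p', hp', hvp'⟩ hvQ

def suppressRel (A : U → U → Prop) (w z o : U) : U → U → Prop :=
  fun a b => (A a b ∧ a ≠ w ∧ b ≠ w) ∨ (a = z ∧ b = o)

theorem IsInducedChain.of_suppressRel {A : U → U → Prop} {v z o : U} {l r : List U}
    (hq : IsInducedChain (suppressRel A v z o) (l ++ o :: r)) (hnd : (l ++ v :: o :: r).Nodup)
    (hzv : A z v) (hvo : A v o) (hin : ∀ a, A a v → a = z) (hout : ∀ b, A v b → b = o)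
    (hoin : ∀ a, A a o → a = v) : IsInducedChain A (l ++ v :: o :: r) := by
  obtain ⟨hvq, hnd₀⟩ := List.nodup_cons.mp (List.nodup_middle.mp hnd)
  have hmem : ∀ c ∈ l ++ v :: o :: r, c ≠ v → c ∈ l ++ o :: r := by
    simp only [List.mem_append, List.mem_cons]; tauto
  have hpred : ∀ c ∈ l ++ o :: r, suppressRel A v z o c o → l.getLast? = some c :=
    fun c hc h => hnd₀.pair_infix_iff_getLast?.mp ((hq c hc o (by simp)).mp h)
  intro a ha b hb
  by_cases hbv : b = v
  · rw [hbv, hnd.pair_infix_iff_getLast?]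
    refine ⟨fun h => ?_, fun h => ?_⟩
    · obtain rfl := hin a h
      exact hpred a (hmem a ha fun h => hvq (by simp [hout v (h ▸ hzv)])) (.inr ⟨rfl, rfl⟩)
    · obtain ⟨l', rfl⟩ := List.getLast?_eq_some_iff.mp h
      rcases hq.rel (a := a) (b := o) ⟨l', r, by simp⟩ with ⟨hao, -, -⟩ | ⟨rfl, -⟩
      · exact absurd (List.mem_append_left _ (hoin a hao ▸ List.mem_of_getLast? h)) hvq
      · exact hzv
  by_cases hav : a = v
  · rw [hav, hnd.pair_infix_iff_head?, List.head?_cons, Option.some_inj]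
    exact ⟨fun h => (hout b h).symm, fun h => h ▸ hvo⟩
  rw [hnd₀.pair_infix_insert_iff hav hbv, ← hq a (hmem a ha hav) b (hmem b hb hbv)]
  refine ⟨fun h => ⟨.inl ⟨h, hav, hbv⟩, fun ⟨_, hbo⟩ => hav (hoin a (hbo ▸ h))⟩, ?_⟩
  rintro ⟨⟨h, -, -⟩ | ⟨rfl, rfl⟩, hzo⟩
  · exact h
  · exact absurd ⟨hpred _ (hmem _ ha hav) (.inr ⟨rfl, rfl⟩), rfl⟩ hzo

theorem DLeaf.of_suppressRel {s : Set U} {A : U → U → Prop} {v z o c : U}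
    (hc : DLeaf (s \ {v}) (suppressRel A v z o) c) (hin : ∀ a, A a v → a = z) :
    DLeaf s A c := by
  refine ⟨hc.1.1, fun w hcw => ?_⟩
  by_cases hwv : w = v
  · exact hc.2 o (.inr ⟨hin c (hwv ▸ hcw), rfl⟩)
  · exact hc.2 w (.inl ⟨hcw, hc.1.2, hwv⟩)

theorem IsLeafIPPOn.exists_of_suppressRel {s : Set U} {A : U → U → Prop} {v z o : U}
    {P : Set (List U)} (hP : IsLeafIPPOn (s \ {v}) (suppressRel A v z o) P) (hA : IsDag s A)
    (hzv : A z v) (hvo : A v o) (hin : ∀ a, A a v → a = z) (hout : ∀ b, A v b → b = o)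
    (hoin : ∀ a, A a o → a = v) : ∃ P', IsLeafIPPOn s A P' := by
  obtain ⟨hpaths, hcov, hleaf⟩ := hP
  have hov : o ≠ v := fun h => hA.2.2 v (.single (h ▸ hvo))
  have hvs : v ∈ s := (hA.2.1 hvo).1
  obtain ⟨q, ⟨hqP, hoq⟩, hqu⟩ := hcov o ⟨(hA.2.1 hvo).2, hov⟩
  obtain ⟨l, r, rfl⟩ := List.append_of_mem hoq
  obtain ⟨-, hnd, hqs, hqc⟩ := isInducedPathOn_iff.mp (hpaths _ hqP)
  have hvq : v ∉ l ++ o :: r := fun h => (hqs v h).2 rfl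
  have hnd' : (l ++ v :: o :: r).Nodup := List.nodup_middle.mpr (List.nodup_cons.mpr ⟨hvq, hnd⟩)
  refine ⟨P \ {l ++ o :: r} ∪ {l ++ v :: o :: r}, ?_, ?_, ?_⟩
  · rintro p (⟨hpP, hpq⟩ | rfl)
    · obtain ⟨hne, hndp, hps, hpc⟩ := isInducedPathOn_iff.mp (hpaths p hpP)
      have hop : o ∉ p := fun h => hpq (hqu p ⟨hpP, h⟩)
      refine isInducedPathOn_iff.mpr ⟨hne, hndp, fun u hu => (hps u hu).1, hpc.congr ?_⟩
      intro a ha b hb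
      have hav : a ≠ v := (hps a ha).2
      have hbv : b ≠ v := (hps b hb).2
      have hbo : b ≠ o := fun h => hop (h ▸ hb)
      simp [suppressRel, hav, hbv, hbo]
    · refine isInducedPathOn_iff.mpr ⟨by simp, hnd', fun u hu => ?_,
        hqc.of_suppressRel hnd' hzv hvo hin hout hoin⟩
      by_cases huv : u = v
      · exact huv ▸ hvs
      · exact (hqs u (by simp_all)).1
  · rw [← Set.sdiff_union_of_subset (Set.singleton_subset_iff.mpr hvs)]
    refine existsUnique_mem_diff_union hcov (by simpa using hqP) ?_ (fun u => ?_) (by simp)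
    · rintro u rfl p hpP hvp
      exact ((isInducedPathOn_iff.mp (hpaths p hpP)).2.2.1 u hvp).2 rfl
    · simp only [Set.mem_singleton_iff, exists_eq_left, List.mem_append, List.mem_cons]
      tauto
  · rintro p (⟨hpP, -⟩ | rfl)
    · obtain ⟨c, hc, hcl⟩ := hleaf p hpP
      exact ⟨c, hc, hcl.of_suppressRel hin⟩
    · obtain ⟨c, hc, hcl⟩ := hleaf _ hqP
      refine ⟨c, ?_, hcl.of_suppressRel hin⟩
      simpa [List.getLast?_append, List.getLast?_cons_cons] using hc

theorem IsDag.suppressIf {s s' : Set U} {A A' : U → U → Prop} {w : U} (hA : IsDag s A)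
    (h : SuppressIf s A w s' A') : IsDag s' A' := by
  rcases h with ⟨-, rfl, rfl⟩ | ⟨-, z, o, hzw, hwo, rfl, rfl⟩
  · exact hA
  have hzw' : z ≠ w := fun h => hA.2.2 w (.single (h ▸ hzw))
  have how : o ≠ w := fun h => hA.2.2 w (.single (h ▸ hwo))
  refine ⟨hA.1.sdiff, ?_, fun v hv => hA.2.2 v (Relation.TransGen.lift' id ?_ v v hv)⟩
  · rintro a b (⟨hab, ha, hb⟩ | ⟨rfl, rfl⟩)
    · exact ⟨⟨(hA.2.1 hab).1, ha⟩, ⟨(hA.2.1 hab).2, hb⟩⟩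
    · exact ⟨⟨(hA.2.1 hzw).1, hzw'⟩, ⟨(hA.2.1 hwo).2, how⟩⟩
  · rintro a b (⟨hab, -, -⟩ | ⟨rfl, rfl⟩)
    · exact .single hab
    · exact .tail (.single hzw) hwo

theorem SuppressIf.rel_of_ne_s12 {s s' : Set U} {A A' : U → U → Prop} {w a b : U}
    (h : SuppressIf s A w s' A') (hab : A a b) (ha : a ≠ w) (hb : b ≠ w) : A' a b := by
  rcases h with ⟨-, -, rfl⟩ | ⟨-, z, o, -, -, -, rfl⟩
  exacts [hab, .inl ⟨hab, ha, hb⟩]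

theorem SuppressIf.rel_cases {s s' : Set U} {A A' : U → U → Prop} {w a b : U}
    (h : SuppressIf s A w s' A') (hab : A' a b) : A a b ∨ (A a w ∧ A w b) := by
  rcases h with ⟨-, -, rfl⟩ | ⟨-, z, o, hzw, hwo, -, rfl⟩
  · exact .inl hab
  · rcases hab with ⟨hab, -, -⟩ | ⟨rfl, rfl⟩
    exacts [.inl hab, .inr ⟨hzw, hwo⟩]

theorem exists_leafIPP_of_suppressIf {s s' : Set U} {A A' : U → U → Prop} {w o : U}
    (hA : IsDag s A) (h : SuppressIf s A w s' A') (hwo : A w o) (hoin : ∀ a, A a o → a = w)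
    (hP : ∃ P, IsLeafIPPOn s' A' P) : ∃ P, IsLeafIPPOn s A P := by
  rcases h with ⟨-, rfl, rfl⟩ | ⟨⟨-, ⟨z', -, hin⟩, ⟨o', -, hout⟩⟩, z, o₁, hzw, hwo₁, rfl, rfl⟩
  · exact hP
  obtain rfl : o₁ = o := (hout o₁ hwo₁).trans (hout o hwo).symm
  obtain ⟨P, hP⟩ := hP
  exact hP.exists_of_suppressRel hA hzw hwo₁ (fun a ha => (hin a ha).trans (hin z hzw).symm)
    (fun b hb => (hout b hb).trans (hout o₁ hwo₁).symm) hoin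

def deleteArc (A : U → U → Prop) (u v : U) : U → U → Prop :=
  fun a b => A a b ∧ ¬(a = u ∧ b = v)

theorem IsDag.deleteArc {s : Set U} {A : U → U → Prop} (hA : IsDag s A) (u v : U) :
    IsDag s (deleteArc A u v) :=
  ⟨hA.1, fun _ _ h => hA.2.1 h.1,
    fun w hw => hA.2.2 w (Relation.TransGen.mono (fun _ _ h => h.1) w w hw)⟩

theorem IsLeafIPPOn.split_after {s : Set U} {B : U → U → Prop} {P : Set (List U)}
    {r t : List U} {x x' : U} (hP : IsLeafIPPOn s B P) (hq : r ++ x' :: t ∈ P) (ht : t ≠ [])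
    (hxP : [x] ∈ P) (hx : DLeaf s B x) (hxx : B x' x) (hxin : ∀ a, B a x → a = x')
    (hxq : x ∉ r ++ x' :: t) :
    IsLeafIPPOn s B (P \ {r ++ x' :: t, [x]} ∪ {r ++ [x', x], t}) := by
  obtain ⟨hpaths, hcov, hleaf⟩ := hP
  have hqeq : r ++ x' :: t = r ++ [x'] ++ t := by simp
  have hx'x : r ++ [x', x] = r ++ [x'] ++ [x] := by simp
  have hq' := hpaths _ hq
  rw [hqeq] at hq' hxq
  have hnd := (isInducedPathOn_iff.mp hq').2.1
  have hdisj : ∀ v ∈ r ++ [x', x], v ∉ t := by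
    rw [hx'x]
    intro v hv hvt
    rcases List.mem_append.mp hv with hv | hv
    · exact (List.nodup_append.mp hnd).2.2 v hv v hvt rfl
    · exact hxq (List.mem_append_right _ (List.mem_singleton.mp hv ▸ hvt))
  refine ⟨?_, ?_, ?_⟩
  · rintro p (⟨hpP, -⟩ | rfl | rfl)
    · exact hpaths p hpP
    · rw [hx'x]
      exact (hq'.of_infix (List.prefix_append _ t).isInfix (by simp)).append_leaf (by simp) hxx
        (fun a _ ha => hxin a ha) hx (fun h => hxq (List.mem_append_left _ h))
    · exact hq'.of_infix (List.suffix_append _ _).isInfix ht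
  · rw [← Set.union_empty s]
    refine existsUnique_mem_diff_union hcov (by simp [Set.insert_subset_iff, hq, hxP])
      (by simp) (fun v => ?_) ?_
    · simp only [Set.mem_insert_iff, Set.mem_singleton_iff, exists_eq_or_imp, exists_eq_left,
        Set.mem_empty_iff_false, or_false, hqeq, List.mem_append, List.mem_cons,
        List.not_mem_nil]
      tauto
    · rintro v q₁ (rfl | rfl) q₂ (rfl | rfl) h₁ h₂
      exacts [rfl, absurd h₂ (hdisj v h₁), absurd h₁ (hdisj v h₂), rfl]
  · rintro p (⟨hpP, -⟩ | rfl | rfl)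
    · exact hleaf p hpP
    · exact ⟨x, by simp, hx⟩
    · obtain ⟨c, hc, hcl⟩ := hleaf _ hq
      exact ⟨c, by rwa [hqeq, List.getLast?_append_of_ne_nil _ ht] at hc, hcl⟩

theorem IsLeafIPPOn.exists_separating {s : Set U} {B : U → U → Prop} {P : Set (List U)}
    {x x' y' : U} (hP : IsLeafIPPOn s B P) (hx : DLeaf s B x) (hxx : B x' x)
    (hxin : ∀ a, B a x → a = x') (hyx : y' ≠ x) (hreach : ¬ Relation.ReflTransGen B y' x') :
    ∃ P', IsLeafIPPOn s B P' ∧ ∀ p ∈ P', x' ∈ p → y' ∉ p := by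
  by_cases hsep : ∀ p ∈ P, x' ∈ p → y' ∉ p
  · exact ⟨P, hP, hsep⟩
  push Not at hsep
  obtain ⟨q, hqP, hx'q, hy'q⟩ := hsep
  obtain ⟨r, t, rfl⟩ := List.append_of_mem hx'q
  obtain ⟨-, hnd, hqs, hqc⟩ := isInducedPathOn_iff.mp (hP.1 _ hqP)
  have hy'x' : y' ≠ x' := fun h => hreach (h ▸ .refl)
  have hy'r : y' ∉ r := fun h => hreach (hqc.transGen h List.mem_cons_self).to_reflTransGen
  have hy't : y' ∈ t := by simpa [hy'r, hy'x'] using hy'q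
  have hxq : x ∉ r ++ x' :: t := by
    intro hxq
    obtain ⟨t', rfl⟩ :=
      List.head?_eq_some_iff.mp (hnd.pair_infix_iff_head?.mp ((hqc x' hx'q x hxq).mp hxx))
    rcases t' with _ | ⟨b, t'⟩
    · exact hyx (by simpa using hy't)
    · exact hx.2 b (hqc.rel ⟨r ++ [x'], t', by simp⟩)
  have hxP : [x] ∈ P := by
    obtain ⟨px, ⟨hpxP, hxpx⟩, -⟩ := hP.2.1 x hx.1
    obtain ⟨-, -, -, hpxc⟩ := isInducedPathOn_iff.mp (hP.1 px hpxP)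
    refine hpxc.eq_singleton_of_leaf hxpx hx.2 (fun a ha hax => hxq ?_) ▸ hpxP
    obtain rfl := hxin a hax
    exact (hP.2.1 a (hqs a hx'q)).unique ⟨hpxP, ha⟩ ⟨hqP, hx'q⟩ ▸ hxpx
  refine ⟨_, hP.split_after hqP (List.ne_nil_of_mem hy't) hxP hx hxx hxin hxq, ?_⟩
  rintro p (⟨hpP, hpq⟩ | rfl | rfl) hx'p
  · exact absurd (.inl ((hP.2.1 x' (hqs x' hx'q)).unique ⟨hpP, hx'p⟩ ⟨hqP, hx'q⟩)) hpq
  · simp [hy'r, hy'x', hyx]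
  · exact ((List.nodup_cons.mp (List.nodup_middle.mp hnd)).1 (List.mem_append_right _ hx'p)).elim

theorem IsLeafIPPOn.of_deleteArc {s : Set U} {A : U → U → Prop} {P : Set (List U)}
    {u v w : U} (hP : IsLeafIPPOn s (deleteArc A u v) P) (hsep : ∀ p ∈ P, u ∈ p → v ∉ p)
    (huw : A u w) (hwv : w ≠ v) : IsLeafIPPOn s A P := by
  obtain ⟨hpaths, hcov, hleaf⟩ := hP
  refine ⟨fun p hp => ?_, hcov, fun p hp => ?_⟩
  · obtain ⟨hne, hnd, hps, hpc⟩ := isInducedPathOn_iff.mp (hpaths p hp)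
    refine isInducedPathOn_iff.mpr ⟨hne, hnd, hps, hpc.congr fun a ha b hb => ?_⟩
    exact ⟨fun hab => ⟨hab, fun ⟨hau, hbv⟩ => hsep p hp (hau ▸ ha) (hbv ▸ hb)⟩, And.left⟩
  · obtain ⟨c, hc, hcs, hcl⟩ := hleaf p hp
    refine ⟨c, hc, hcs, fun b hcb => ?_⟩
    by_cases h : c = u ∧ b = v
    · exact hcl w ⟨h.1 ▸ huw, fun h' => hwv h'.2⟩
    · exact hcl b ⟨hcb, h⟩

theorem exists_leafIPP_of_deleteArc {s : Set U} {A : U → U → Prop} {x x' y' : U}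
    (hA : IsDag s A) (hxy : A x' y') (hxx : A x' x) (hx : DLeaf s A x)
    (hxin : ∀ a, A a x → a = x') (hyx : y' ≠ x)
    (hP : ∃ P, IsLeafIPPOn s (deleteArc A x' y') P) : ∃ P, IsLeafIPPOn s A P := by
  obtain ⟨P, hP⟩ := hP
  have hreach : ¬ Relation.ReflTransGen (deleteArc A x' y') y' x' := fun h =>
    hA.2.2 x' (.head' hxy (Relation.ReflTransGen.mono (fun _ _ h => h.1) _ _ h))
  obtain ⟨P', hP', hsep⟩ := hP.exists_separating ⟨hx.1, fun b h => hx.2 b h.1⟩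
    ⟨hxx, fun h => hyx h.2.symm⟩ (fun a ha => hxin a ha.1) hyx hreach
  exact ⟨P', hP'.of_deleteArc hsep hxx hyx.symm⟩

theorem reticPick_leafIPP_general
    {U : Type*} (s : Set U) (A : U → U → Prop)
    (hdag : IsDag s A)
    (hleafdeg : ∀ v, DLeaf s A v → ∃! w, A w v)
    (x y : U) (s' : Set U) (A' : U → U → Prop)
    (hpick : ReticPickAt s A x y s' A')
    (h : ∃ P : Set (List U), IsLeafIPPOn s' A' P) :
    ∃ P : Set (List U), IsLeafIPPOn s A P := by
  obtain ⟨⟨-, hx, hy, -⟩, x', y', hx'x, hy'y, -, hx'y', s₁, A₁, hs₁, hs₂⟩ := hpick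
  have hxin : ∀ a, A a x → a = x' := fun a ha => (hleafdeg x hx).unique ha hx'x
  have hyin : ∀ a, A a y → a = y' := fun a ha => (hleafdeg y hy).unique ha hy'y
  have hy'x' : y' ≠ x' := fun h => hdag.2.2 y' (.single (h ▸ hx'y'))
  have hyx' : y ≠ x' := fun h => hy.2 y' (h ▸ hx'y')
  have hB : IsDag s (deleteArc A x' y') := hdag.deleteArc x' y'
  refine exists_leafIPP_of_deleteArc hdag hx'y' hx'x hx hxin (fun h => hx.2 y (h ▸ hy'y)) ?_
  refine exists_leafIPP_of_suppressIf hB hs₁ ⟨hx'x, fun h => hx.2 y (h.2 ▸ hy'y)⟩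
    (fun a ha => hxin a ha.1) ?_
  refine exists_leafIPP_of_suppressIf (hB.suppressIf hs₁) hs₂
    (hs₁.rel_of_ne_s12 ⟨hy'y, fun h => hy'x' h.1⟩ hy'x' hyx') (fun a ha => ?_) h
  rcases hs₁.rel_cases ha with ha | ⟨-, hx'y⟩
  · exact hyin a ha.1
  · exact absurd (hyin x' hx'y.1) hy'x'.symm

/-- Let `N = (s, A)` be a DAG with no subdivision vertex in
which all leaves have indegree 1, let `(x, y)` be a reticulated cherry of `N`,
and let `N' = (s', A')` be the DAG obtained from `N` by the cherry-picking
operation on `(x, y)`.  If `N'` admits a leaf induced path partition, then so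
does `N`. -/
theorem reticPick_leafIPP
    {U : Type*} (s : Set U) (A : U → U → Prop)
    (hdag : IsDag s A)
    (hnosub : ∀ v, ¬ IsSubdiv s A v)
    (hleafdeg : ∀ v, DLeaf s A v → ∃! w, A w v)
    (x y : U) (s' : Set U) (A' : U → U → Prop)
    (hpick : ReticPickAt s A x y s' A')
    (h : ∃ P : Set (List U), IsLeafIPPOn s' A' P) :
    ∃ P : Set (List U), IsLeafIPPOn s A P :=
  reticPick_leafIPP_general s A hdag hleafdeg x y s' A' hpick h

end Paper
end
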